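/- arXiv:1901.00479 — 6 statements merged into one kernel-verified Lean document; each statement's English description precedes it below -/
import Mathlib

section
/- (Vizing's theorem, the benchmark result of the paper.) Every finite simple graph G with maximum degree at most Δ admits a proper edge coloring of all of its edges using at most Δ + 1 colors; that is, the chromatic index of G satisfies χ'(G) ≤ Δ + 1. -/
/-!
Vizing's argument. Color the edges one at a time, keeping a proper partial coloring with `k`
colors; as every degree is below `k`, every vertex misses some color. To color an uncolored edge
`x v₀`, grow a fan `v₀, v₁, …` of neighbors of `x` in which the color of `x vᵢ₊₁` is missing at
`vᵢ`. If a color `α` missing at `x` is also missing at the last vertex `vₙ`, shifting the colors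
down the fan colors `x v₀`. Otherwise take `β` missing at `vₙ`: if `β` is missing at `x` we shift
with `β`, and if `β` is on an edge `x w` with `w` outside the fan, the fan grows by `w`. In the
remaining case `x vⱼ₊₁` is colored `β`, so `β` is missing at both `vⱼ` and `vₙ`; the `α`/`β`-path
from `x` ends at most at one of them, and swapping `α` and `β` on the component of the other one
makes `α` missing at both `x` and the end of a subfan.
-/

lemma Option.map_swap_eq_self {ι : Type*} [DecidableEq ι] {o : Option ι} {a b : ι}
    (ha : o ≠ some a) (hb : o ≠ some b) : o.map (Equiv.swap a b) = o := by
  cases o with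
  | none => rfl
  | some i => simp_all [Equiv.swap_apply_of_ne_of_ne]

namespace SimpleGraph

variable {V : Type*} {H : SimpleGraph V}

lemma Walk.eq_of_neighborSet_subsingleton {x w b : V} (hxw : H.Adj x w)
    (hw : (H.neighborSet w).Subsingleton) (q : H.Walk w b) (hxq : x ∉ q.support) : b = w := by
  cases q with
  | nil => rfl
  | cons hwu q =>
    rw [Walk.support_cons, List.mem_cons, not_or] at hxq
    exact absurd (hw hxw.symm hwu ▸ q.start_mem_support) hxq.2

/-- Follow the only edge `x w` out of `x`, delete it, and continue from `w`. -/
lemma eq_of_reachable_of_neighborSet_subsingleton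
    (hH : ∀ {v a b d}, H.Adj v a → H.Adj v b → H.Adj v d → a = b ∨ a = d ∨ b = d)
    {x a b : V} (hx : (H.neighborSet x).Subsingleton) (ha : (H.neighborSet a).Subsingleton)
    (hb : (H.neighborSet b).Subsingleton) (hax : a ≠ x) (hbx : b ≠ x)
    (hxa : H.Reachable x a) (hxb : H.Reachable x b) : a = b := by
  obtain ⟨P, hP⟩ := hxa.exists_isPath
  clear hxa
  induction hn : P.length generalizing H x with
  | zero => exact absurd (Walk.eq_of_length_eq_zero hn).symm hax
  | succ n ih =>
    cases P with
    | nil => exact absurd rfl hax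
    | @cons _ w _ hxw p =>
    obtain ⟨hp, hxp⟩ := Walk.cons_isPath_iff _ _ |>.1 hP
    obtain ⟨Q, hQ⟩ := hxb.exists_isPath
    cases Q with
    | nil => exact absurd rfl hbx
    | cons hxw' q =>
    obtain ⟨hq, hxq⟩ := Walk.cons_isPath_iff _ _ |>.1 hQ
    obtain rfl := hx hxw hxw'
    by_cases haw : a = w
    · subst haw; exact (q.eq_of_neighborSet_subsingleton hxw ha hxq).symm
    by_cases hbw : b = w
    · subst hbw; exact p.eq_of_neighborSet_subsingleton hxw hb hxp
    set H' := H.deleteEdges {s(x, w)}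
    have hle : H' ≤ H := H.deleteEdges_le _
    have hx_notMem : ∀ {z} (r : H.Walk w z), x ∉ r.support →
        ∀ e ∈ r.edges, e ∉ ({s(x, w)} : Set _) := fun r hxr e he he' =>
      hxr (r.fst_mem_support_of_mem_edges ((Set.mem_singleton_iff.1 he') ▸ he))
    have hw' : (H'.neighborSet w).Subsingleton := by
      intro u hu u' hu'
      simp only [mem_neighborSet, H', deleteEdges_adj, Set.mem_singleton_iff] at hu hu'
      have hux : u ≠ x := by rintro rfl; exact hu.2 Sym2.eq_swap
      have hux' : u' ≠ x := by rintro rfl; exact hu'.2 Sym2.eq_swap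
      rcases hH hu.1 hu'.1 hxw.symm with h | h | h
      exacts [h, absurd h hux, absurd h hux']
    exact ih (fun h₁ h₂ h₃ => hH (hle h₁) (hle h₂) (hle h₃)) hw'
      (ha.anti fun _ h => hle h) (hb.anti fun _ h => hle h) haw hbw
      ⟨q.toDeleteEdges _ (hx_notMem q hxq)⟩ (p.toDeleteEdges _ (hx_notMem p hxp))
      (hp.toDeleteEdges _ _ _) (by rw [Walk.length_transfer]; simpa using hn)

/-- Colors are `0, …, k - 1`; `none` marks an uncolored edge. -/
structure IsPartialEdgeColoring (G : SimpleGraph V) (k : ℕ) (c : Sym2 V → Option ℕ) : Prop where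
  mem_edgeSet {e : Sym2 V} {γ : ℕ} : c e = some γ → e ∈ G.edgeSet
  lt {e : Sym2 V} {γ : ℕ} : c e = some γ → γ < k
  eq_of_mem {u : V} {e f : Sym2 V} {γ : ℕ} : u ∈ e → u ∈ f → c e = some γ → c f = some γ → e = f

def IsMissing (c : Sym2 V → Option ℕ) (u : V) (γ : ℕ) : Prop :=
  ∀ e, u ∈ e → c e ≠ some γ

def CanColorEdge (G : SimpleGraph V) (k : ℕ) (c : Sym2 V → Option ℕ) (e : Sym2 V) : Prop :=
  ∃ c', G.IsPartialEdgeColoring k c' ∧ c' ⁻¹' {none} ⊆ c ⁻¹' {none} \ {e}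

variable {G : SimpleGraph V} {k : ℕ} {c : Sym2 V → Option ℕ} {u w : V} {e : Sym2 V}
  {α β γ : ℕ}

lemma IsPartialEdgeColoring.eq_of_adj (hc : G.IsPartialEdgeColoring k c) {a b : V}
    (ha : c s(u, a) = some γ) (hb : c s(u, b) = some γ) : a = b :=
  Sym2.congr_right.1 (hc.eq_of_mem (Sym2.mem_mk_left u a) (Sym2.mem_mk_left u b) ha hb)

lemma IsPartialEdgeColoring.exists_isMissing [Fintype (G.neighborSet u)]
    (hc : G.IsPartialEdgeColoring k c) (hu : G.degree u < k) : ∃ γ < k, IsMissing c u γ := by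
  classical
  set used := (G.neighborFinset u).image fun w => c s(u, w)
  have hcard : used.card < ((Finset.range k).image some).card := by
    rw [Finset.card_image_of_injective _ (Option.some_injective ℕ), Finset.card_range]
    exact Finset.card_image_le.trans_lt hu
  obtain ⟨_, hγ, hγ_unused⟩ := Finset.exists_mem_notMem_of_card_lt_card hcard
  obtain ⟨γ, hγk, rfl⟩ := Finset.mem_image.1 hγ
  refine ⟨γ, Finset.mem_range.1 hγk, fun e hue hce => hγ_unused ?_⟩
  obtain ⟨w, rfl⟩ := Sym2.mem_iff_exists.1 hue
  exact Finset.mem_image.2 ⟨w, (G.mem_neighborFinset u w).2 (hc.mem_edgeSet hce), hce⟩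

section Update

variable [DecidableEq V]

lemma IsMissing.update (h : IsMissing c u γ) {o : Option ℕ} (ho : u ∈ e → o ≠ some γ) :
    IsMissing (Function.update c e o) u γ := by
  intro f hf
  rcases eq_or_ne f e with rfl | hfe
  · simpa using ho hf
  · simpa [Function.update_of_ne hfe] using h f hf

lemma IsPartialEdgeColoring.uncolor (hc : G.IsPartialEdgeColoring k c) (e : Sym2 V) :
    G.IsPartialEdgeColoring k (Function.update c e none) where
  mem_edgeSet {f _} h := by
    rcases eq_or_ne f e with rfl | hfe
    · simp at h
    · exact hc.mem_edgeSet (by simpa [Function.update_of_ne hfe] using h)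
  lt {f _} h := by
    rcases eq_or_ne f e with rfl | hfe
    · simp at h
    · exact hc.lt (by simpa [Function.update_of_ne hfe] using h)
  eq_of_mem {_ f₁ f₂ _} h₁ h₂ hf₁ hf₂ := by
    rcases eq_or_ne f₁ e with rfl | hf₁e
    · simp at hf₁
    rcases eq_or_ne f₂ e with rfl | hf₂e
    · simp at hf₂
    rw [Function.update_of_ne hf₁e] at hf₁
    rw [Function.update_of_ne hf₂e] at hf₂
    exact hc.eq_of_mem h₁ h₂ hf₁ hf₂

lemma IsPartialEdgeColoring.color (hc : G.IsPartialEdgeColoring k c) (hadj : G.Adj u w)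
    (hα : α < k) (hu : IsMissing c u α) (hw : IsMissing c w α) :
    G.IsPartialEdgeColoring k (Function.update c s(u, w) (some α)) where
  mem_edgeSet {f _} h := by
    rcases eq_or_ne f s(u, w) with rfl | hf
    · exact hadj
    · exact hc.mem_edgeSet (by simpa [Function.update_of_ne hf] using h)
  lt {f _} h := by
    rcases eq_or_ne f s(u, w) with rfl | hf
    · simp_all
    · exact hc.lt (by simpa [Function.update_of_ne hf] using h)
  eq_of_mem {t f₁ f₂ γ} h₁ h₂ hf₁ hf₂ := by
    have key : ∀ {f f'}, f = s(u, w) → t ∈ f → t ∈ f' →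
        Function.update c s(u, w) (some α) f = some γ →
        Function.update c s(u, w) (some α) f' = some γ → f = f' := by
      rintro f f' rfl ht ht' hf hf'
      by_contra hne
      rw [Function.update_self, Option.some_inj] at hf
      rw [Function.update_of_ne (Ne.symm hne), ← hf] at hf'
      rcases Sym2.mem_iff.1 ht with rfl | rfl
      exacts [hu f' ht' hf', hw f' ht' hf']
    rcases eq_or_ne f₁ s(u, w) with hf₁e | hf₁e
    · exact key hf₁e h₁ h₂ hf₁ hf₂
    rcases eq_or_ne f₂ s(u, w) with hf₂e | hf₂e
    · exact (key hf₂e h₂ h₁ hf₂ hf₁).symm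
    rw [Function.update_of_ne hf₁e] at hf₁
    rw [Function.update_of_ne hf₂e] at hf₂
    exact hc.eq_of_mem h₁ h₂ hf₁ hf₂

end Update

section Kempe

def kempeGraph (c : Sym2 V → Option ℕ) (α β : ℕ) : SimpleGraph V :=
  fromEdgeSet {e | c e = some α ∨ c e = some β}

lemma IsPartialEdgeColoring.eq_or_eq_or_eq_of_kempeGraph_adj (hc : G.IsPartialEdgeColoring k c)
    {v a b d : V}
    (ha : (kempeGraph c α β).Adj v a) (hb : (kempeGraph c α β).Adj v b)
    (hd : (kempeGraph c α β).Adj v d) : a = b ∨ a = d ∨ b = d := by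
  simp only [kempeGraph, fromEdgeSet_adj, Set.mem_ofPred_eq] at ha hb hd
  rcases ha.1 with ha | ha <;> rcases hb.1 with hb | hb <;> rcases hd.1 with hd | hd <;>
    first
    | exact Or.inl (hc.eq_of_adj ha hb)
    | exact Or.inr (Or.inl (hc.eq_of_adj ha hd))
    | exact Or.inr (Or.inr (hc.eq_of_adj hb hd))

lemma IsPartialEdgeColoring.neighborSet_kempeGraph_subsingleton
    (hc : G.IsPartialEdgeColoring k c) (hu : IsMissing c u α ∨ IsMissing c u β) :
    ((kempeGraph c α β).neighborSet u).Subsingleton := by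
  intro a ha b hb
  simp only [mem_neighborSet, kempeGraph, fromEdgeSet_adj, Set.mem_ofPred_eq] at ha hb
  rcases hu with hu | hu <;> rcases ha.1 with ha | ha <;> rcases hb.1 with hb | hb <;>
    first
    | exact hc.eq_of_adj ha hb
    | exact absurd ha (hu _ (Sym2.mem_mk_left u a))
    | exact absurd hb (hu _ (Sym2.mem_mk_left u b))

open Classical in
noncomputable def kempeSwap (c : Sym2 V → Option ℕ) (α β : ℕ) (z : V) (e : Sym2 V) : Option ℕ :=
  if ∃ w ∈ e, (kempeGraph c α β).Reachable z w then (c e).map (Equiv.swap α β) else c e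

variable {z : V}

lemma kempeSwap_eq_or (e : Sym2 V) :
    kempeSwap c α β z e = c e ∨ kempeSwap c α β z e = (c e).map (Equiv.swap α β) := by
  unfold kempeSwap
  split_ifs <;> simp

lemma kempeSwap_eq_none_iff : kempeSwap c α β z e = none ↔ c e = none := by
  rcases kempeSwap_eq_or (z := z) e with h | h <;> rw [h]
  simp

lemma kempeSwap_apply_of_reachable (hz : (kempeGraph c α β).Reachable z u) (hu : u ∈ e) :
    kempeSwap c α β z e = (c e).map (Equiv.swap α β) :=
  if_pos ⟨u, hu, hz⟩

/-- An edge colored `α` or `β` never joins the component of `z` to a vertex outside it. -/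
lemma IsPartialEdgeColoring.kempeSwap_apply_of_not_reachable (hc : G.IsPartialEdgeColoring k c)
    (hz : ¬ (kempeGraph c α β).Reachable z u) (hu : u ∈ e) : kempeSwap c α β z e = c e := by
  unfold kempeSwap
  split_ifs with h
  · obtain ⟨w, hw, hzw⟩ := h
    obtain ⟨t, rfl⟩ := Sym2.mem_iff_exists.1 hu
    have hαβ : ¬ (c s(u, t) = some α ∨ c s(u, t) = some β) := by
      intro hαβ
      have hadj : (kempeGraph c α β).Adj u t := (fromEdgeSet_adj _).2
        ⟨hαβ, G.ne_of_adj (by rcases hαβ with h | h <;> exact hc.mem_edgeSet h)⟩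
      rcases Sym2.mem_iff.1 hw with rfl | rfl
      exacts [hz hzw, hz (hzw.trans hadj.symm.reachable)]
    push Not at hαβ
    exact Option.map_swap_eq_self hαβ.1 hαβ.2
  · rfl

lemma IsPartialEdgeColoring.kempeSwap (hc : G.IsPartialEdgeColoring k c) (hα : α < k)
    (hβ : β < k) : G.IsPartialEdgeColoring k (kempeSwap c α β z) where
  mem_edgeSet {e _} h := by
    rcases kempeSwap_eq_or (z := z) e with h' | h' <;> rw [h'] at h
    · exact hc.mem_edgeSet h
    · obtain ⟨_, hδ, -⟩ := Option.map_eq_some_iff.1 h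
      exact hc.mem_edgeSet hδ
  lt {e _} h := by
    rcases kempeSwap_eq_or (z := z) e with h' | h' <;> rw [h'] at h
    · exact hc.lt h
    · obtain ⟨δ, hδ, rfl⟩ := Option.map_eq_some_iff.1 h
      have := hc.lt hδ
      rw [Equiv.swap_apply_def]
      split_ifs <;> assumption
  eq_of_mem {t _ _ _} h₁ h₂ hf₁ hf₂ := by
    by_cases hz : (kempeGraph c α β).Reachable z t
    · rw [kempeSwap_apply_of_reachable hz h₁] at hf₁
      rw [kempeSwap_apply_of_reachable hz h₂, ← hf₁] at hf₂
      obtain ⟨_, hδ, -⟩ := Option.map_eq_some_iff.1 hf₁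
      exact hc.eq_of_mem h₁ h₂ hδ (Option.map_injective (Equiv.injective _) hf₂ ▸ hδ)
    · rw [hc.kempeSwap_apply_of_not_reachable hz h₁] at hf₁
      rw [hc.kempeSwap_apply_of_not_reachable hz h₂] at hf₂
      exact hc.eq_of_mem h₁ h₂ hf₁ hf₂

lemma IsMissing.kempeSwap_of_ne (h : IsMissing c u γ) (hγα : γ ≠ α) (hγβ : γ ≠ β) :
    IsMissing (kempeSwap c α β z) u γ := by
  intro e hu he
  rcases kempeSwap_eq_or (z := z) e with h' | h' <;> rw [h'] at he
  · exact h e hu he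
  · obtain ⟨δ, hδ, hswap⟩ := Option.map_eq_some_iff.1 he
    rw [Equiv.swap_apply_eq_iff, Equiv.swap_apply_of_ne_of_ne hγα hγβ] at hswap
    exact h e hu (hswap ▸ hδ)

lemma IsMissing.kempeSwap_of_reachable (h : IsMissing c u β)
    (hz : (kempeGraph c α β).Reachable z u) : IsMissing (kempeSwap c α β z) u α := by
  intro e hu he
  rw [kempeSwap_apply_of_reachable hz hu] at he
  obtain ⟨δ, hδ, hswap⟩ := Option.map_eq_some_iff.1 he
  rw [Equiv.swap_apply_eq_iff, Equiv.swap_apply_left] at hswap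
  exact h e hu (hswap ▸ hδ)

lemma IsMissing.kempeSwap_of_not_reachable (hc : G.IsPartialEdgeColoring k c)
    (h : IsMissing c u γ) (hz : ¬ (kempeGraph c α β).Reachable z u) :
    IsMissing (kempeSwap c α β z) u γ := by
  intro e hu
  rw [hc.kempeSwap_apply_of_not_reachable hz hu]
  exact h e hu

end Kempe

section Fan

structure IsFan (G : SimpleGraph V) (c : Sym2 V → Option ℕ) (x : V) (v : ℕ → V) (n : ℕ) :
    Prop where
  adj : ∀ i ≤ n, G.Adj x (v i)
  injOn : Set.InjOn v (Set.Iic n)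
  uncolored : c s(x, v 0) = none
  isMissing_succ : ∀ i < n, ∃ γ, c s(x, v (i + 1)) = some γ ∧ IsMissing c (v i) γ

variable {x : V} {v : ℕ → V} {n i j : ℕ}

lemma IsFan.mono (h : IsFan G c x v n) {m : ℕ} (hm : m ≤ n) : IsFan G c x v m where
  adj i hi := h.adj i (hi.trans hm)
  injOn := h.injOn.mono (Set.Iic_subset_Iic.2 hm)
  uncolored := h.uncolored
  isMissing_succ i hi := h.isMissing_succ i (by omega)

lemma IsFan.eq_of_eq (h : IsFan G c x v n) (hi : i ≤ n) (hj : j ≤ n) (hij : v i = v j) : i = j :=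
  h.injOn (Set.mem_Iic.2 hi) (Set.mem_Iic.2 hj) hij

lemma IsFan.notMem_edge (h : IsFan G c x v n) (hi : i ≤ n) (hj : j ≤ n) (hij : i ≠ j) :
    v i ∉ s(x, v j) := by
  rw [Sym2.mem_iff, not_or]
  exact ⟨(h.adj i hi).ne', fun h' => hij (h.eq_of_eq hi hj h')⟩

lemma IsFan.edge_ne (h : IsFan G c x v n) (hi : i ≤ n) (hj : j ≤ n) (hij : i ≠ j) :
    s(x, v i) ≠ s(x, v j) :=
  fun h' => h.notMem_edge hi hj hij (h' ▸ Sym2.mem_mk_right x (v i))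

lemma IsFan.lt_card [Fintype V] (h : IsFan G c x v n) : n < Fintype.card V := by
  have := Fintype.card_le_of_injective (fun i : Fin (n + 1) => v i)
    fun i j hij => Fin.ext (h.eq_of_eq (Nat.lt_succ_iff.1 i.2) (Nat.lt_succ_iff.1 j.2) hij)
  simpa using this

lemma IsFan.extend (h : IsFan G c x v n) (hw : G.Adj x w) (hwv : ∀ i ≤ n, v i ≠ w)
    (hβ : c s(x, w) = some β) (hβn : IsMissing c (v n) β) :
    IsFan G c x (Function.update v (n + 1) w) (n + 1) := by
  have hv : ∀ i ≤ n, Function.update v (n + 1) w i = v i :=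
    fun i hi => Function.update_of_ne (by omega) _ _
  refine ⟨fun i hi => ?_, fun i hi j hj hij => ?_, by rw [hv 0 (by omega)]; exact h.uncolored,
    fun i hi => ?_⟩
  · rcases Nat.lt_or_ge n i with hni | hin
    · rw [show i = n + 1 by omega, Function.update_self]; exact hw
    · rw [hv i hin]; exact h.adj i hin
  · simp only [Set.mem_Iic] at hi hj
    rcases Nat.lt_or_ge n i with hni | hin <;> rcases Nat.lt_or_ge n j with hnj | hjn
    · omega
    · rw [show i = n + 1 by omega, Function.update_self, hv j hjn] at hij
      exact absurd hij.symm (hwv j hjn)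
    · rw [show j = n + 1 by omega, Function.update_self, hv i hin] at hij
      exact absurd hij (hwv i hin)
    · rw [hv i hin, hv j hjn] at hij
      exact h.eq_of_eq hin hjn hij
  · rw [hv i (by omega)]
    rcases Nat.lt_or_ge i n with hin | hni
    · rw [hv (i + 1) hin]; exact h.isMissing_succ i hin
    · obtain rfl : i = n := by omega
      rw [Function.update_self]; exact ⟨β, hβ, hβn⟩

/-- Shift the colors down the fan: `x vᵢ` takes the color of `x vᵢ₊₁`, and `x vₙ` takes `α`. -/
lemma IsFan.canColorEdge_of_isMissing [DecidableEq V] (hc : G.IsPartialEdgeColoring k c)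
    (h : IsFan G c x v n) (hα : α < k) (hx : IsMissing c x α) (hn : IsMissing c (v n) α) :
    G.CanColorEdge k c s(x, v 0) := by
  induction n generalizing c v with
  | zero =>
    refine ⟨_, hc.color (h.adj 0 le_rfl) hα hx hn, fun e he => ?_⟩
    rcases eq_or_ne e s(x, v 0) with rfl | hne
    · simp at he
    · exact ⟨by simpa [Function.update_of_ne hne] using he, hne⟩
  | succ n ih =>
    obtain ⟨γ, hγ, hγ0⟩ := h.isMissing_succ 0 n.succ_pos
    have h10 : s(x, v 1) ≠ s(x, v 0) := h.edge_ne (by omega) (by omega) one_ne_zero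
    set c₀ := Function.update c s(x, v 1) none
    set c₁ := Function.update c₀ s(x, v 0) (some γ)
    have hγx : IsMissing c₀ x γ := by
      intro f hf hf'
      rcases eq_or_ne f s(x, v 1) with rfl | hne
      · simp [c₀] at hf'
      · simp only [c₀, Function.update_of_ne hne] at hf'
        exact hne (hc.eq_of_mem hf (Sym2.mem_mk_left _ _) hf' hγ)
    have hc₁ : G.IsPartialEdgeColoring k c₁ :=
      (hc.uncolor _).color (h.adj 0 (by omega)) (hc.lt hγ) hγx (hγ0.update (by simp))
    have hc₁_of_ne : ∀ f, f ≠ s(x, v 0) → f ≠ s(x, v 1) → c₁ f = c f := fun f h0 h1 => by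
      simp only [c₁, c₀, Function.update_of_ne h0, Function.update_of_ne h1]
    have hfan₁ : IsFan G c₁ x (fun i => v (i + 1)) n := by
      refine ⟨fun i hi => h.adj (i + 1) (by omega), fun i hi j hj hij => ?_, ?_, fun i hi => ?_⟩
      · simp only [Set.mem_Iic] at hi hj
        have := h.eq_of_eq (by omega) (by omega) hij
        omega
      · simp [c₁, c₀, Function.update_of_ne h10]
      · obtain ⟨δ, hδ, hδi⟩ := h.isMissing_succ (i + 1) (by omega)
        refine ⟨δ, ?_, (hδi.update (by simp)).update fun hmem => ?_⟩
        · rwa [hc₁_of_ne _ (h.edge_ne (by omega) (by omega) (by omega))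
            (h.edge_ne (by omega) (by omega) (by omega))]
        · exact absurd hmem (h.notMem_edge (by omega) (by omega) (by omega))
    have hγα : γ ≠ α := fun hγα => hx _ (Sym2.mem_mk_left _ _) (hγα ▸ hγ)
    obtain ⟨c', hc', hsub⟩ := ih hc₁ hfan₁
      ((hx.update (by simp)).update (by simpa using hγα))
      ((hn.update (by simp)).update fun hmem =>
        absurd hmem (h.notMem_edge le_rfl (by omega) (by omega)))
    refine ⟨c', hc', hsub.trans fun f ⟨hf, hf1⟩ => ?_⟩
    have hf0 : f ≠ s(x, v 0) := by rintro rfl; simp [c₁] at hf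
    refine ⟨?_, hf0⟩
    rw [Set.mem_preimage, ← hc₁_of_ne f hf0 hf1]
    exact hf

lemma IsFan.kempeSwap (hc : G.IsPartialEdgeColoring k c) (h : IsFan G c x v n)
    (hx : IsMissing c x α) (hz : ¬ (kempeGraph c α β).Reachable (v n) x)
    (hβ : ∀ i < n, c s(x, v (i + 1)) = some β → ¬ (kempeGraph c α β).Reachable (v n) (v i)) :
    IsFan G (kempeSwap c α β (v n)) x v n where
  adj := h.adj
  injOn := h.injOn
  uncolored := kempeSwap_eq_none_iff.2 h.uncolored
  isMissing_succ i hi := by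
    obtain ⟨γ, hγ, hγi⟩ := h.isMissing_succ i hi
    refine ⟨γ, by rw [hc.kempeSwap_apply_of_not_reachable hz (Sym2.mem_mk_left _ _), hγ], ?_⟩
    have hγα : γ ≠ α := fun hγα => hx _ (Sym2.mem_mk_left _ _) (hγα ▸ hγ)
    by_cases hγβ : γ = β
    · exact hγi.kempeSwap_of_not_reachable hc (hβ i hi (hγβ ▸ hγ))
    · exact hγi.kempeSwap_of_ne hγα hγβ

lemma IsFan.canColorEdge_of_kempeSwap [DecidableEq V] (hc : G.IsPartialEdgeColoring k c)
    (h : IsFan G c x v n) (hα : α < k) (hβ : β < k) (hx : IsMissing c x α)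
    (hn : IsMissing c (v n) β) (hz : ¬ (kempeGraph c α β).Reachable (v n) x)
    (hβi : ∀ i < n, c s(x, v (i + 1)) = some β → ¬ (kempeGraph c α β).Reachable (v n) (v i)) :
    G.CanColorEdge k c s(x, v 0) := by
  obtain ⟨c', hc', hsub⟩ := (h.kempeSwap hc hx hz hβi).canColorEdge_of_isMissing
    (hc.kempeSwap hα hβ) hα (hx.kempeSwap_of_not_reachable hc hz)
    (hn.kempeSwap_of_reachable (.refl _))
  exact ⟨c', hc', hsub.trans fun f ⟨hf, hf0⟩ => ⟨kempeSwap_eq_none_iff.1 hf, hf0⟩⟩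

/-- The `α`/`β`-path starting at `x` cannot end at both `v j` and `v n`, which both miss `β`;
swapping on the component of one it misses turns `α` into a color missing at both ends of
a subfan. -/
lemma IsFan.canColorEdge_of_eq_some [DecidableEq V] (hc : G.IsPartialEdgeColoring k c)
    (h : IsFan G c x v n) (hα : α < k) (hβ : β < k) (hx : IsMissing c x α)
    (hn : IsMissing c (v n) β) (hj : c s(x, v (j + 1)) = some β) (hjn : j + 1 ≤ n) :
    G.CanColorEdge k c s(x, v 0) := by
  obtain ⟨γ, hγ, hγj⟩ := h.isMissing_succ j hjn
  have hβj : IsMissing c (v j) β := Option.some_inj.1 (hγ.symm.trans hj) ▸ hγj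
  have hβ_only : ∀ i < n, c s(x, v (i + 1)) = some β → i = j := fun i hi hi' => by
    have := h.eq_of_eq (by omega) hjn (hc.eq_of_adj hi' hj)
    omega
  by_cases hxj : (kempeGraph c α β).Reachable x (v j)
  · have hxn : ¬ (kempeGraph c α β).Reachable x (v n) := fun hxn =>
      (show j ≠ n by omega) <| h.eq_of_eq (by omega) le_rfl <|
        eq_of_reachable_of_neighborSet_subsingleton hc.eq_or_eq_or_eq_of_kempeGraph_adj
          (hc.neighborSet_kempeGraph_subsingleton (Or.inl hx))
          (hc.neighborSet_kempeGraph_subsingleton (Or.inr hβj))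
          (hc.neighborSet_kempeGraph_subsingleton (Or.inr hn))
          (h.adj j (by omega)).ne' (h.adj n le_rfl).ne' hxj hxn
    refine h.canColorEdge_of_kempeSwap hc hα hβ hx hn (fun h' => hxn h'.symm) ?_
    intro i hi hi' hni
    obtain rfl := hβ_only i hi hi'
    exact hxn (hxj.trans hni.symm)
  · refine (h.mono (by omega)).canColorEdge_of_kempeSwap hc hα hβ hx hβj
      (fun h' => hxj h'.symm) ?_
    intro i hi hi'
    exact absurd (hβ_only i (by omega) hi') (by omega)

end Fan

section Finite

variable [Fintype V] [DecidableEq V] [DecidableRel G.Adj]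

lemma IsFan.canColorEdge_or_extend (hΔ : ∀ u, G.degree u < k) {x : V} {v : ℕ → V} {n : ℕ}
    (hc : G.IsPartialEdgeColoring k c) (h : IsFan G c x v n) :
    G.CanColorEdge k c s(x, v 0) ∨ ∃ w, IsFan G c x (Function.update v (n + 1) w) (n + 1) := by
  obtain ⟨α, hα, hx⟩ := hc.exists_isMissing (hΔ x)
  obtain ⟨β, hβ, hn⟩ := hc.exists_isMissing (hΔ (v n))
  by_cases hβx : IsMissing c x β
  · exact .inl (h.canColorEdge_of_isMissing hc hβ hβx hn)
  obtain ⟨e, hxe, hce⟩ : ∃ e, x ∈ e ∧ c e = some β := by simpa [IsMissing] using hβx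
  obtain ⟨w, rfl⟩ := Sym2.mem_iff_exists.1 hxe
  by_cases hwv : ∃ i ≤ n, v i = w
  · obtain ⟨_ | j, hj, rfl⟩ := hwv
    · simp [h.uncolored] at hce
    · exact .inl (h.canColorEdge_of_eq_some hc hα hβ hx hn hce hj)
  · push Not at hwv
    exact .inr ⟨w, h.extend (hc.mem_edgeSet hce) hwv hce hn⟩

theorem IsFan.canColorEdge (hΔ : ∀ u, G.degree u < k) {x : V} {v : ℕ → V} {n : ℕ}
    (hc : G.IsPartialEdgeColoring k c) (h : IsFan G c x v n) : G.CanColorEdge k c s(x, v 0) := by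
  rcases h.canColorEdge_or_extend hΔ hc with hcol | ⟨w, hw⟩
  · exact hcol
  · have := hw.lt_card
    simpa using hw.canColorEdge hΔ hc
termination_by Fintype.card V - n

lemma IsPartialEdgeColoring.canColorEdge (hΔ : ∀ u, G.degree u < k)
    (hc : G.IsPartialEdgeColoring k c) (he : e ∈ G.edgeSet) (hce : c e = none) :
    G.CanColorEdge k c e := by
  induction e using Sym2.ind with
  | h x y =>
    refine IsFan.canColorEdge (v := fun _ => y) (n := 0) hΔ hc
      ⟨fun _ _ => he, fun i hi j hj _ => ?_, hce, fun i hi => absurd hi (Nat.not_lt_zero i)⟩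
    simp only [Set.mem_Iic, nonpos_iff_eq_zero] at hi hj
    rw [hi, hj]

theorem IsPartialEdgeColoring.exists_forall_ne_none (hΔ : ∀ u, G.degree u < k)
    {c : Sym2 V → Option ℕ} (hc : G.IsPartialEdgeColoring k c) :
    ∃ c', G.IsPartialEdgeColoring k c' ∧ ∀ e ∈ G.edgeSet, c' e ≠ none := by
  by_cases htot : ∀ e ∈ G.edgeSet, c e ≠ none
  · exact ⟨c, hc, htot⟩
  push Not at htot
  obtain ⟨e, he, hce⟩ := htot
  obtain ⟨c', hc', hsub⟩ := hc.canColorEdge hΔ he hce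
  have : (G.edgeSet ∩ c' ⁻¹' {none}).ncard < (G.edgeSet ∩ c ⁻¹' {none}).ncard :=
    Set.ncard_lt_ncard ⟨fun f hf => ⟨hf.1, (hsub hf.2).1⟩,
      fun hsub' => (hsub (hsub' ⟨he, hce⟩).2).2 rfl⟩ (Set.toFinite _)
  exact hc'.exists_forall_ne_none hΔ
termination_by (G.edgeSet ∩ c ⁻¹' {none}).ncard

end Finite

theorem exists_isPartialEdgeColoring_forall_ne_none [Fintype V] [DecidableRel G.Adj]
    (hΔ : ∀ u, G.degree u < k) :
    ∃ c, G.IsPartialEdgeColoring k c ∧ ∀ e ∈ G.edgeSet, c e ≠ none := by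
  classical
  refine IsPartialEdgeColoring.exists_forall_ne_none hΔ (c := fun _ => none) ⟨?_, ?_, ?_⟩ <;>
    simp

end SimpleGraph

theorem vizing_edge_coloring_general {V : Type*} [Fintype V]
    (G : SimpleGraph V) [DecidableRel G.Adj] (Δ : ℕ)
    (hΔ : ∀ v : V, G.degree v ≤ Δ) :
    ∃ φ : Sym2 V → ℕ,
      (∀ e ∈ G.edgeSet, φ e < Δ + 1) ∧
      (∀ e₁ ∈ G.edgeSet, ∀ e₂ ∈ G.edgeSet,
        e₁ ≠ e₂ → (∃ x : V, x ∈ e₁ ∧ x ∈ e₂) → φ e₁ ≠ φ e₂) := by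
  obtain ⟨c, hc, htotal⟩ :=
    G.exists_isPartialEdgeColoring_forall_ne_none fun v => Nat.lt_succ_of_le (hΔ v)
  refine ⟨fun e => (c e).getD 0, fun e he => ?_, fun e₁ he₁ e₂ he₂ hne ⟨x, hx₁, hx₂⟩ heq => ?_⟩
  · obtain ⟨γ, hγ⟩ := Option.ne_none_iff_exists'.1 (htotal e he)
    simpa [hγ] using hc.lt hγ
  · obtain ⟨γ₁, h₁⟩ := Option.ne_none_iff_exists'.1 (htotal e₁ he₁)
    obtain ⟨γ₂, h₂⟩ := Option.ne_none_iff_exists'.1 (htotal e₂ he₂)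
    simp only [h₁, h₂, Option.getD_some] at heq
    exact hne (hc.eq_of_mem hx₁ hx₂ h₁ (heq ▸ h₂))

/-- **Vizing's theorem.** Every finite simple graph with maximum degree at most `Δ`
admits a proper edge coloring of all of its edges using at most `Δ + 1` colors. -/
theorem vizing_edge_coloring {V : Type*} [Fintype V] [DecidableEq V]
    (G : SimpleGraph V) [DecidableRel G.Adj] (Δ : ℕ)
    (hΔ : ∀ v : V, G.degree v ≤ Δ) :
    ∃ φ : Sym2 V → ℕ,
      (∀ e ∈ G.edgeSet, φ e < Δ + 1) ∧
      (∀ e₁ ∈ G.edgeSet, ∀ e₂ ∈ G.edgeSet,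
        e₁ ≠ e₂ → (∃ x : V, x ∈ e₁ ∧ x ∈ e₂) → φ e₁ ≠ φ e₂) :=
  vizing_edge_coloring_general G Δ hΔ
end

section
/- (Fan-repair extension lemma, Section 2.1.) Let G be a finite simple graph with maximum degree at most Δ, let φ be a proper partial edge coloring of G with color set {1, …, Δ+1}, and let e = uv be an uncolored edge. Then there exists a proper partial edge coloring φ' of G with the same color set {1, …, Δ+1} whose set of colored edges is exactly the set of colored edges of φ together with e. In other words, any proper partial (Δ+1)-edge-coloring can be modified, by recoloring some already-colored edges, so that one additional prescribed edge becomes colored while all previously colored edges remain colored. -/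
/-- A proper partial edge coloring of `G` with color set `C`: colors are assigned
(optionally) to edges of `G`, take values in `C`, and distinct colored edges
sharing an endpoint receive different colors. -/
def IsProperPartialEC {V : Type*} (G : SimpleGraph V) (C : Set ℕ)
    (φ : Sym2 V → Option ℕ) : Prop :=
  (∀ e : Sym2 V, φ e ≠ none → e ∈ G.edgeSet) ∧
  (∀ (e : Sym2 V) (c : ℕ), φ e = some c → c ∈ C) ∧
  (∀ e₁ e₂ : Sym2 V, e₁ ≠ e₂ → (∃ x : V, x ∈ e₁ ∧ x ∈ e₂) →
    ∀ c : ℕ, φ e₁ = some c → φ e₂ ≠ some c)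

/-!
Vizing's fan argument. Let `α` be a colour missing at `u`. Grow a fan at `u`: `v 0 = v`, and
`v (i + 1)` a neighbour of `u` whose edge colour `β i` is missing at `v i`. Let `c` be missing at
the last vertex `v n`. If `c` is also missing at `u`, rotate the fan (each `u (v i)` takes the
colour of `u (v (i + 1))`) and colour `u (v n)` with `c`. If `c = β j` for some `j < n`, note that
the `(α, c)`-coloured edges form paths and cycles, and `u`, `v j`, `v n` each meet at most one of
them, so they cannot all lie on one path: the `(α, c)`-chain of `v j` or of `v n` avoids `u`.
Exchanging `α` and `c` on that chain makes `α` missing at both `u` and that fan vertex, and we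
rotate up to it. Otherwise `c` sits on an edge `u y` with `y` new, and the fan grows; its vertices
are distinct, so this stops.
-/

namespace SimpleGraph

variable {V : Type*} {H : SimpleGraph V}

lemma Walk.IsPath.toSubgraph_adj_of_adj [Finite V] {u a x y : V} {p : H.Walk u a}
    (hp : p.IsPath) (hua : u ≠ a) (hdeg : ∀ x, (H.neighborSet x).ncard ≤ 2)
    (hu : (H.neighborSet u).ncard ≤ 1) (ha : (H.neighborSet a).ncard ≤ 1)
    (hx : x ∈ p.support) (hxy : H.Adj x y) : p.toSubgraph.Adj x y := by
  have hnil : ¬ p.Nil := Walk.not_nil_of_ne hua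
  suffices p.toSubgraph.neighborSet x = H.neighborSet x by
    rwa [← Subgraph.mem_neighborSet, this]
  refine Set.eq_of_subset_of_ncard_le (p.toSubgraph.neighborSet_subset x) ?_ (Set.toFinite _)
  obtain ⟨i, rfl, hi⟩ := Walk.mem_support_iff_exists_getVert.mp hx
  rcases Nat.eq_zero_or_pos i with rfl | hi0
  · rw [Walk.getVert_zero, hp.neighborSet_toSubgraph_startpoint hnil, Set.ncard_singleton]
    exact hu
  rcases hi.eq_or_lt with rfl | hil
  · rw [Walk.getVert_length, hp.neighborSet_toSubgraph_endpoint hnil, Set.ncard_singleton]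
    exact ha
  · rw [hp.ncard_neighborSet_toSubgraph_internal_eq_two hi0.ne' hil]
    exact hdeg _

lemma not_reachable_of_ncard_neighborSet_le_one [Finite V] {u a b : V}
    (hdeg : ∀ x, (H.neighborSet x).ncard ≤ 2) (hu : (H.neighborSet u).ncard ≤ 1)
    (ha : (H.neighborSet a).ncard ≤ 1) (hb : (H.neighborSet b).ncard ≤ 1)
    (hua : u ≠ a) (hub : u ≠ b) (hab : a ≠ b) (hr : H.Reachable u a) : ¬ H.Reachable u b := by
  classical
  intro hr'
  obtain ⟨p, hp⟩ := hr.some.toPath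
  have hb_mem : b ∈ p.support := p.mem_verts_toSubgraph.mp <|
    hr'.mem_subgraphVerts (fun x hx y hxy => ?_) p.start_mem_verts_toSubgraph
  · obtain ⟨i, rfl, hi⟩ := Walk.mem_support_iff_exists_getVert.mp hb_mem
    have hi0 : i ≠ 0 := by rintro rfl; exact hub p.getVert_zero.symm
    have hil : i < p.length := hi.lt_of_ne (by rintro rfl; exact hab p.getVert_length.symm)
    have := (hp.ncard_neighborSet_toSubgraph_internal_eq_two hi0 hil).symm.trans_le <|
      Set.ncard_le_ncard (p.toSubgraph.neighborSet_subset _) (Set.toFinite _)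
    omega
  · exact hp.toSubgraph_adj_of_adj hua hdeg hu ha (p.mem_verts_toSubgraph.mp hx) hxy

end SimpleGraph

open Function

section

variable {V : Type*}

def coloredEdges (φ : Sym2 V → Option ℕ) : Set (Sym2 V) := {e | φ e ≠ none}

def missingColors (φ : Sym2 V → Option ℕ) (x : V) : Set ℕ := {c | ∀ y, φ s(x, y) ≠ some c}

section Coloring

variable {G : SimpleGraph V} {C : Set ℕ} {φ : Sym2 V → Option ℕ}

theorem isProperPartialEC_iff : IsProperPartialEC G C φ ↔
    (∀ e, φ e ≠ none → e ∈ G.edgeSet) ∧ (∀ e c, φ e = some c → c ∈ C) ∧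
      ∀ x y y' c, φ s(x, y) = some c → φ s(x, y') = some c → y = y' := by
  refine and_congr_right fun _ => and_congr_right fun _ => ⟨fun h x y y' c hy hy' => ?_, ?_⟩
  · by_contra hne
    exact h _ _ (fun heq => hne (Sym2.congr_right.mp heq))
      ⟨x, Sym2.mem_mk_left _ _, Sym2.mem_mk_left _ _⟩ c hy hy'
  · rintro h e₁ e₂ hne ⟨x, h₁, h₂⟩ c hc₁ hc₂
    obtain ⟨y, rfl⟩ := Sym2.mem_iff_exists.mp h₁
    obtain ⟨y', rfl⟩ := Sym2.mem_iff_exists.mp h₂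
    exact hne (congrArg _ (h x y y' c hc₁ hc₂))

namespace IsProperPartialEC

theorem adj (hφ : IsProperPartialEC G C φ) {x y : V} {c : ℕ} (h : φ s(x, y) = some c) :
    G.Adj x y :=
  G.mem_edgeSet.mp (hφ.1 s(x, y) (by simp [h]))

theorem mem (hφ : IsProperPartialEC G C φ) {e : Sym2 V} {c : ℕ} (h : φ e = some c) : c ∈ C :=
  hφ.2.1 e c h

theorem eq_of_eq_some (hφ : IsProperPartialEC G C φ) {x y y' : V} {c : ℕ}
    (h : φ s(x, y) = some c) (h' : φ s(x, y') = some c) : y = y' :=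
  (isProperPartialEC_iff.mp hφ).2.2 x y y' c h h'

theorem exists_mem_missingColors (hφ : IsProperPartialEC G C φ) (x : V) [Fintype (G.neighborSet x)]
    (hC : G.degree x < C.ncard) : ∃ c ∈ C, c ∈ missingColors φ x := by
  by_contra! h
  have hsub : C ⊆ (fun y => (φ s(x, y)).getD 0) '' G.neighborSet x := by
    intro c hc
    obtain ⟨y, hy⟩ : ∃ y, φ s(x, y) = some c := by simpa [missingColors] using h c hc
    exact ⟨y, hφ.adj hy, by simp [hy]⟩
  have := (Set.ncard_le_ncard hsub (Set.toFinite _)).trans (Set.ncard_image_le (Set.toFinite _))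
  rw [Set.ncard_eq_toFinset_card' (G.neighborSet x)] at this
  exact this.not_gt hC

theorem mono (hφ : IsProperPartialEC G C φ) {ψ : Sym2 V → Option ℕ}
    (h : ∀ e c, ψ e = some c → φ e = some c) : IsProperPartialEC G C ψ := by
  rw [isProperPartialEC_iff]
  refine ⟨fun e he => ?_, fun e c hc => hφ.mem (h e c hc),
    fun x y y' c hy hy' => hφ.eq_of_eq_some (h _ _ hy) (h _ _ hy')⟩
  obtain ⟨c, hc⟩ := Option.ne_none_iff_exists'.mp he
  exact hφ.1 e (by simp [h e c hc])

end IsProperPartialEC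

section Update

variable [DecidableEq V]

theorem coloredEdges_update_none (e : Sym2 V) :
    coloredEdges (update φ e none) = coloredEdges φ \ {e} := by
  ext e'
  by_cases h : e' = e <;> simp [coloredEdges, h]

theorem coloredEdges_update_some (e : Sym2 V) (c : ℕ) :
    coloredEdges (update φ e (some c)) = insert e (coloredEdges φ) := by
  ext e'
  by_cases h : e' = e <;> simp [coloredEdges, h]

theorem mem_missingColors_update {x : V} {c : ℕ} (h : c ∈ missingColors φ x) {o : Option ℕ}
    (ho : o ≠ some c) (e : Sym2 V) : c ∈ missingColors (update φ e o) x := by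
  intro y
  by_cases hy : s(x, y) = e
  · simpa [hy] using ho
  · rw [update_of_ne hy]
    exact h y

theorem mem_missingColors_update_of_notMem {x : V} {c : ℕ} (h : c ∈ missingColors φ x)
    {e : Sym2 V} (hx : x ∉ e) (o : Option ℕ) : c ∈ missingColors (update φ e o) x := by
  intro y
  rw [update_of_ne (fun hy : s(x, y) = e => hx (hy ▸ Sym2.mem_mk_left x y))]
  exact h y

theorem IsProperPartialEC.update_none (hφ : IsProperPartialEC G C φ) (e : Sym2 V) :
    IsProperPartialEC G C (update φ e none) :=
  hφ.mono fun e' c h => by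
    by_cases he : e' = e
    · simp [he] at h
    · rwa [update_of_ne he] at h

theorem IsProperPartialEC.update_some (hφ : IsProperPartialEC G C φ) {a b : V} {c : ℕ}
    (hab : G.Adj a b) (hc : c ∈ C) (ha : c ∈ missingColors φ a) (hb : c ∈ missingColors φ b) :
    IsProperPartialEC G C (update φ s(a, b) (some c)) := by
  have hmiss : ∀ x y, s(x, y) = s(a, b) → c ∈ missingColors φ x := fun x y h => by
    rcases Sym2.mem_iff.mp (h ▸ Sym2.mem_mk_left x y) with rfl | rfl <;> assumption
  rw [isProperPartialEC_iff]
  refine ⟨fun e he => ?_, fun e d hd => ?_, fun x y y' d hy hy' => ?_⟩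
  · by_cases h : e = s(a, b)
    · exact h ▸ G.mem_edgeSet.mpr hab
    · exact hφ.1 e (by rwa [update_of_ne h] at he)
  · by_cases h : e = s(a, b)
    · simp_all
    · exact hφ.mem (by rwa [update_of_ne h] at hd)
  by_cases h₁ : s(x, y) = s(a, b) <;> by_cases h₂ : s(x, y') = s(a, b)
  · exact Sym2.congr_right.mp (h₁.trans h₂.symm)
  · rw [h₁, update_self, Option.some_inj] at hy
    rw [update_of_ne h₂, ← hy] at hy'
    exact absurd hy' (hmiss x y h₁ y')
  · rw [h₂, update_self, Option.some_inj] at hy'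
    rw [update_of_ne h₁, ← hy'] at hy
    exact absurd hy (hmiss x y' h₂ y)
  · rw [update_of_ne h₁] at hy
    rw [update_of_ne h₂] at hy'
    exact hφ.eq_of_eq_some hy hy'

end Update

end Coloring

section Kempe

variable {G : SimpleGraph V} {C : Set ℕ} {φ : Sym2 V → Option ℕ} {α c : ℕ}

def kempeGraph (φ : Sym2 V → Option ℕ) (α c : ℕ) : SimpleGraph V where
  Adj x y := x ≠ y ∧ (φ s(x, y) = some α ∨ φ s(x, y) = some c)
  symm := ⟨fun x y h => ⟨h.1.symm, by rw [Sym2.eq_swap]; exact h.2⟩⟩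
  loopless := ⟨fun _ h => h.1 rfl⟩

theorem ncard_neighborSet_kempeGraph_le (hφ : IsProperPartialEC G C φ) (x : V) :
    ((kempeGraph φ α c).neighborSet x).ncard ≤ ({α, c} \ missingColors φ x).ncard := by
  refine Set.ncard_le_ncard_of_injOn (fun y => (φ s(x, y)).getD 0) ?_ ?_ (Set.toFinite _)
  · rintro y ⟨-, h | h⟩ <;> simp only [h, Option.getD_some] <;>
      refine ⟨by simp, fun hm => hm y h⟩
  · rintro y ⟨-, hy⟩ y' ⟨-, hy'⟩ (h : (φ s(x, y)).getD 0 = (φ s(x, y')).getD 0)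
    obtain ⟨d, hd⟩ : ∃ d, φ s(x, y) = some d := by rcases hy with hy | hy <;> exact ⟨_, hy⟩
    obtain ⟨d', hd'⟩ : ∃ d, φ s(x, y') = some d := by rcases hy' with hy | hy <;> exact ⟨_, hy⟩
    rw [hd, hd', Option.getD_some, Option.getD_some] at h
    exact hφ.eq_of_eq_some hd (h ▸ hd')

theorem not_reachable_kempeGraph [Finite V] (hφ : IsProperPartialEC G C φ) {u a b : V}
    (hua : u ≠ a) (hub : u ≠ b) (hab : a ≠ b) (hu : α ∈ missingColors φ u)
    (ha : c ∈ missingColors φ a) (hb : c ∈ missingColors φ b)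
    (hr : (kempeGraph φ α c).Reachable u a) : ¬ (kempeGraph φ α c).Reachable u b := by
  have hle : ∀ x, ((kempeGraph φ α c).neighborSet x).ncard ≤ ({α, c} \ missingColors φ x).ncard :=
    ncard_neighborSet_kempeGraph_le hφ
  have hpair : ({α, c} : Set ℕ).ncard ≤ 2 := (Set.ncard_insert_le _ _).trans (by simp)
  refine SimpleGraph.not_reachable_of_ncard_neighborSet_le_one (fun x => ?_) ?_ ?_ ?_ hua hub hab hr
  · exact (hle x).trans ((Set.ncard_le_ncard Set.sdiff_subset (Set.toFinite _)).trans hpair)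
  all_goals refine (hle _).trans <| (Set.ncard_le_ncard (Set.sdiff_subset_sdiff_right
    (Set.singleton_subset_iff.mpr ‹_›)) (Set.toFinite _)).trans ?_
  all_goals rw [Set.ncard_sdiff_singleton_of_mem (by simp)]; omega

open scoped Classical in
/-- An edge meeting the chain but coloured neither `α` nor `c` is fixed by the transposition, so
this exchanges `α` and `c` exactly on the `(α, c)`-chain of `w`. -/
noncomputable def kempeSwap (φ : Sym2 V → Option ℕ) (α c : ℕ) (w : V) : Sym2 V → Option ℕ :=
  fun e => if ∃ x ∈ e, (kempeGraph φ α c).Reachable w x then (φ e).map (Equiv.swap α c) else φ e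

variable {w x : V}

theorem kempeSwap_of_reachable (h : (kempeGraph φ α c).Reachable w x) (y : V) :
    kempeSwap φ α c w s(x, y) = (φ s(x, y)).map (Equiv.swap α c) :=
  if_pos ⟨x, Sym2.mem_mk_left x y, h⟩

theorem kempeSwap_of_not_reachable (h : ¬ (kempeGraph φ α c).Reachable w x) (y : V) :
    kempeSwap φ α c w s(x, y) = φ s(x, y) := by
  unfold kempeSwap
  split_ifs with hex
  · obtain ⟨z, hz, hwz⟩ := hex
    obtain rfl | rfl := Sym2.mem_iff.mp hz
    · exact absurd hwz h
    cases hxz : φ s(x, z) with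
    | none => rfl
    | some d =>
      have hne : z ≠ x := by rintro rfl; exact h hwz
      have hd : d ≠ α ∧ d ≠ c := by
        constructor <;> rintro rfl <;>
          exact h (hwz.trans (SimpleGraph.Adj.reachable ⟨hne, by simp [Sym2.eq_swap, hxz]⟩))
      simp [Equiv.swap_apply_of_ne_of_ne hd.1 hd.2]
  · rfl

theorem coloredEdges_kempeSwap : coloredEdges (kempeSwap φ α c w) = coloredEdges φ := by
  ext e
  simp only [coloredEdges, kempeSwap, Set.mem_ofPred_eq]
  split_ifs <;> simp

theorem IsProperPartialEC.kempeSwap (hφ : IsProperPartialEC G C φ) (hα : α ∈ C) (hc : c ∈ C)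
    (w : V) : IsProperPartialEC G C (kempeSwap φ α c w) := by
  rw [isProperPartialEC_iff]
  refine ⟨fun e he => hφ.1 e (coloredEdges_kempeSwap.subset he), fun e d hd => ?_,
    fun x y y' d hy hy' => ?_⟩
  · simp only [_root_.kempeSwap] at hd
    split_ifs at hd
    · obtain ⟨d', hd', rfl⟩ := Option.map_eq_some_iff.mp hd
      rw [Equiv.swap_apply_def]
      split_ifs <;> first | assumption | exact hφ.mem hd'
    · exact hφ.mem hd
  by_cases hx : (kempeGraph φ α c).Reachable w x
  · rw [kempeSwap_of_reachable hx] at hy hy'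
    obtain ⟨d₁, h₁, rfl⟩ := Option.map_eq_some_iff.mp hy
    obtain ⟨d₂, h₂, h⟩ := Option.map_eq_some_iff.mp hy'
    exact hφ.eq_of_eq_some h₁ ((Equiv.injective _ h) ▸ h₂)
  · rw [kempeSwap_of_not_reachable hx] at hy hy'
    exact hφ.eq_of_eq_some hy hy'

theorem missingColors_kempeSwap_of_not_reachable (h : ¬ (kempeGraph φ α c).Reachable w x) :
    missingColors (kempeSwap φ α c w) x = missingColors φ x := by
  simp only [missingColors, kempeSwap_of_not_reachable h]

theorem swap_mem_missingColors_kempeSwap (h : (kempeGraph φ α c).Reachable w x) {d : ℕ}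
    (hd : d ∈ missingColors φ x) : Equiv.swap α c d ∈ missingColors (kempeSwap φ α c w) x := by
  intro y hy
  rw [kempeSwap_of_reachable h] at hy
  obtain ⟨d', hd', h'⟩ := Option.map_eq_some_iff.mp hy
  exact hd y ((Equiv.injective _ h') ▸ hd')

theorem mem_missingColors_kempeSwap {d : ℕ} (hdα : d ≠ α) (hdc : d ≠ c)
    (hd : d ∈ missingColors φ x) : d ∈ missingColors (kempeSwap φ α c w) x := by
  by_cases h : (kempeGraph φ α c).Reachable w x
  · simpa [Equiv.swap_apply_of_ne_of_ne hdα hdc] using swap_mem_missingColors_kempeSwap h hd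
  · rwa [missingColors_kempeSwap_of_not_reachable h]

end Kempe

def IsExtendable (G : SimpleGraph V) (C : Set ℕ) (φ : Sym2 V → Option ℕ) (e : Sym2 V) : Prop :=
  ∃ φ' : Sym2 V → Option ℕ, IsProperPartialEC G C φ' ∧ coloredEdges φ' = insert e (coloredEdges φ)

structure Fan (G : SimpleGraph V) (φ : Sym2 V → Option ℕ) (u : V) (n : ℕ) where
  v : ℕ → V
  β : ℕ → ℕ
  adj : ∀ i ≤ n, G.Adj u (v i)
  injOn : Set.InjOn v (Set.Iic n)
  uncolored : φ s(u, v 0) = none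
  color_succ : ∀ i < n, φ s(u, v (i + 1)) = some (β i)
  missing : ∀ i < n, β i ∈ missingColors φ (v i)

namespace Fan

variable {G : SimpleGraph V} {C : Set ℕ} {φ ψ : Sym2 V → Option ℕ} {u : V} {n : ℕ}

def single {v : V} (huv : G.Adj u v) (h : φ s(u, v) = none) : Fan G φ u 0 where
  v _ := v
  β _ := 0
  adj _ _ := huv
  injOn i hi j hj _ := by
    simp only [Set.mem_Iic, nonpos_iff_eq_zero] at hi hj
    rw [hi, hj]
  uncolored := h
  color_succ i hi := absurd hi i.not_lt_zero
  missing i hi := absurd hi i.not_lt_zero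

theorem succ_le_card [Finite V] (F : Fan G φ u n) : n + 1 ≤ Nat.card V := by
  have := Set.ncard_le_ncard_of_injOn F.v (Set.mapsTo_univ _ _) F.injOn (Set.toFinite _)
  rwa [Set.ncard_Iic_nat, Set.ncard_univ] at this

section

variable (F : Fan G φ u n)

theorem eq_of_v_eq {i j : ℕ} (hi : i ≤ n) (hj : j ≤ n) (h : F.v i = F.v j) : i = j :=
  F.injOn (Set.mem_Iic.mpr hi) (Set.mem_Iic.mpr hj) h

theorem v_notMem_edge {i j : ℕ} (hi : i ≤ n) (hj : j ≤ n) (hij : i ≠ j) : F.v i ∉ s(u, F.v j) := by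
  rw [Sym2.mem_iff, not_or]
  exact ⟨(F.adj i hi).ne.symm, fun h => hij (F.eq_of_v_eq hi hj h)⟩

theorem edge_ne {i j : ℕ} (hi : i ≤ n) (hj : j ≤ n) (hij : i ≠ j) : s(u, F.v i) ≠ s(u, F.v j) :=
  fun h => F.v_notMem_edge hi hj hij (h ▸ Sym2.mem_mk_right u (F.v i))

theorem eq_of_β_eq (hφ : IsProperPartialEC G C φ) {i j : ℕ} (hi : i < n) (hj : j < n)
    (h : F.β i = F.β j) : i = j :=
  Nat.succ_injective <| F.eq_of_v_eq hi hj <|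
    hφ.eq_of_eq_some (F.color_succ i hi) (h ▸ F.color_succ j hj)

theorem β_ne_of_mem_missingColors {α : ℕ} (hα : α ∈ missingColors φ u) {i : ℕ} (hi : i < n) :
    F.β i ≠ α :=
  fun h => hα _ (h ▸ F.color_succ i hi)

def take {m : ℕ} (hm : m ≤ n) : Fan G φ u m where
  v := F.v
  β := F.β
  adj i hi := F.adj i (hi.trans hm)
  injOn := F.injOn.mono (Set.Iic_subset_Iic.mpr hm)
  uncolored := F.uncolored
  color_succ i hi := F.color_succ i (by omega)
  missing i hi := F.missing i (by omega)

def transfer (hu : ∀ y, ψ s(u, y) = φ s(u, y)) (hmiss : ∀ i < n, F.β i ∈ missingColors ψ (F.v i)) :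
    Fan G ψ u n where
  v := F.v
  β := F.β
  adj := F.adj
  injOn := F.injOn
  uncolored := (hu _).trans F.uncolored
  color_succ i hi := (hu _).trans (F.color_succ i hi)
  missing := hmiss

def snoc {y : V} {c : ℕ} (hy : G.Adj u y) (hyc : φ s(u, y) = some c)
    (hc : c ∈ missingColors φ (F.v n)) (hnew : ∀ i ≤ n, F.v i ≠ y) : Fan G φ u (n + 1) where
  v := update F.v (n + 1) y
  β := update F.β n c
  adj i hi := by
    rcases hi.lt_or_eq with hi | rfl
    · rw [update_of_ne (by omega)]
      exact F.adj i (by omega)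
    · rwa [update_self]
  injOn i hi j hj h := by
    simp only [Set.mem_Iic] at hi hj
    simp only [update_apply] at h
    split_ifs at h with hi' hj' hj'
    · omega
    · exact absurd h.symm (hnew j (by omega))
    · exact absurd h (hnew i (by omega))
    · exact F.eq_of_v_eq (by omega) (by omega) h
  uncolored := by rw [update_of_ne (by omega)]; exact F.uncolored
  color_succ i hi := by
    rcases (Nat.lt_succ_iff.mp hi).lt_or_eq with hi | rfl
    · rw [update_of_ne (by omega), update_of_ne (by omega)]
      exact F.color_succ i hi
    · rwa [update_self, update_self]
  missing i hi := by
    rcases (Nat.lt_succ_iff.mp hi).lt_or_eq with hi | rfl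
    · rw [update_of_ne (by omega), update_of_ne (by omega)]
      exact F.missing i hi
    · rwa [update_self, update_of_ne (by omega)]

end

section Rotate

variable [DecidableEq V] (F : Fan G φ u (n + 1))

def rotate : Sym2 V → Option ℕ :=
  update (update φ s(u, F.v 1) none) s(u, F.v 0) (some (F.β 0))

theorem coloredEdges_rotate :
    coloredEdges F.rotate = insert s(u, F.v 0) (coloredEdges φ \ {s(u, F.v 1)}) := by
  rw [rotate, coloredEdges_update_some, coloredEdges_update_none]

theorem isProperPartialEC_rotate (hφ : IsProperPartialEC G C φ) :
    IsProperPartialEC G C F.rotate := by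
  refine (hφ.update_none _).update_some (F.adj 0 (by omega))
    (hφ.mem (F.color_succ 0 (by omega))) (fun y hy => ?_)
    (mem_missingColors_update (F.missing 0 (by omega)) (by simp) _)
  by_cases hy₁ : s(u, y) = s(u, F.v 1)
  · simp [hy₁] at hy
  · rw [update_of_ne hy₁] at hy
    exact hy₁ (congrArg _ (hφ.eq_of_eq_some hy (F.color_succ 0 (by omega))))

theorem mem_missingColors_rotate_self {c : ℕ} (hc : c ∈ missingColors φ u) :
    c ∈ missingColors F.rotate u :=
  mem_missingColors_update (mem_missingColors_update hc (by simp) _)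
    (by simpa using F.β_ne_of_mem_missingColors hc (by omega)) _

theorem mem_missingColors_rotate_of_notMem {x : V} {c : ℕ} (hc : c ∈ missingColors φ x)
    (hx : x ∉ s(u, F.v 0)) : c ∈ missingColors F.rotate x :=
  mem_missingColors_update_of_notMem (mem_missingColors_update hc (by simp) _) hx _

def tail : Fan G F.rotate u n where
  v i := F.v (i + 1)
  β i := F.β (i + 1)
  adj i hi := F.adj (i + 1) (by omega)
  injOn i hi j hj h := by
    simp only [Set.mem_Iic] at hi hj
    have := F.eq_of_v_eq (i := i + 1) (j := j + 1) (by omega) (by omega) h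
    omega
  uncolored := by
    rw [rotate, update_of_ne (F.edge_ne (by omega) (by omega) (by omega)), update_self]
  color_succ i hi := by
    rw [rotate, update_of_ne (F.edge_ne (by omega) (by omega) (by omega)),
      update_of_ne (F.edge_ne (by omega) (by omega) (by omega))]
    exact F.color_succ (i + 1) (by omega)
  missing i hi := F.mem_missingColors_rotate_of_notMem (F.missing (i + 1) (by omega))
    (F.v_notMem_edge (by omega) (by omega) (by omega))

end Rotate

theorem isExtendable_of_mem_missingColors (hφ : IsProperPartialEC G C φ) (F : Fan G φ u n)
    {c : ℕ} (hcC : c ∈ C) (hcu : c ∈ missingColors φ u) (hcv : c ∈ missingColors φ (F.v n)) :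
    IsExtendable G C φ s(u, F.v 0) := by
  classical
  induction n generalizing φ with
  | zero => exact ⟨_, hφ.update_some (F.adj 0 le_rfl) hcC hcu hcv, coloredEdges_update_some _ _⟩
  | succ n ih =>
    obtain ⟨φ', hφ', hcol⟩ := ih (F.isProperPartialEC_rotate hφ) F.tail
      (F.mem_missingColors_rotate_self hcu)
      (F.mem_missingColors_rotate_of_notMem hcv (F.v_notMem_edge le_rfl (by omega) (by omega)))
    refine ⟨φ', hφ', ?_⟩
    have hcol₁ : s(u, F.v 1) ∈ coloredEdges φ := by
      simp [coloredEdges, F.color_succ 0 (by omega)]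
    rw [hcol, coloredEdges_rotate, Set.insert_comm]
    exact congrArg _ (Set.insert_sdiff_singleton.trans (Set.insert_eq_of_mem hcol₁))

theorem isExtendable_of_not_reachable (hφ : IsProperPartialEC G C φ) (F : Fan G φ u n)
    {α c : ℕ} (hαC : α ∈ C) (hcC : c ∈ C) (hαu : α ∈ missingColors φ u)
    (hcv : c ∈ missingColors φ (F.v n)) (hu : ¬ (kempeGraph φ α c).Reachable (F.v n) u)
    (hβ : ∀ i < n, F.β i = c → ¬ (kempeGraph φ α c).Reachable (F.v n) (F.v i)) :
    IsExtendable G C φ s(u, F.v 0) := by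
  let F' := F.transfer (kempeSwap_of_not_reachable hu) fun i hi => by
    by_cases h : F.β i = c
    · rw [missingColors_kempeSwap_of_not_reachable (hβ i hi h)]
      exact F.missing i hi
    · exact mem_missingColors_kempeSwap (F.β_ne_of_mem_missingColors hαu hi) h (F.missing i hi)
  have hαv : α ∈ missingColors (kempeSwap φ α c (F.v n)) (F.v n) := by
    simpa using swap_mem_missingColors_kempeSwap (α := α) (c := c) (.refl (F.v n)) hcv
  obtain ⟨φ', hφ', hcol⟩ := F'.isExtendable_of_mem_missingColors (hφ.kempeSwap hαC hcC _) hαC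
    (by rwa [missingColors_kempeSwap_of_not_reachable hu]) hαv
  exact ⟨φ', hφ', hcol.trans (congrArg _ coloredEdges_kempeSwap)⟩

theorem isExtendable_of_β_mem_missingColors [Finite V] (hφ : IsProperPartialEC G C φ)
    (F : Fan G φ u n) {α : ℕ} (hαC : α ∈ C) (hαu : α ∈ missingColors φ u) {j : ℕ} (hj : j < n)
    (hjn : F.β j ∈ missingColors φ (F.v n)) : IsExtendable G C φ s(u, F.v 0) := by
  have hcC : F.β j ∈ C := hφ.mem (F.color_succ j hj)
  by_cases hju : (kempeGraph φ α (F.β j)).Reachable (F.v j) u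
  · have hnu : ¬ (kempeGraph φ α (F.β j)).Reachable (F.v n) u := fun hnu =>
      not_reachable_kempeGraph hφ (F.adj j hj.le).ne (F.adj n le_rfl).ne
        (fun h => hj.ne (F.eq_of_v_eq hj.le le_rfl h)) hαu (F.missing j hj) hjn hju.symm hnu.symm
    refine F.isExtendable_of_not_reachable hφ hαC hcC hαu hjn hnu fun i hi hij hni => ?_
    obtain rfl := F.eq_of_β_eq hφ hi hj hij
    exact hnu (hni.trans hju)
  · exact (F.take hj.le).isExtendable_of_not_reachable hφ hαC hcC hαu (F.missing j hj) hju
      fun i hi hij => absurd (F.eq_of_β_eq hφ (hi.trans hj) hj hij) hi.ne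

theorem isExtendable [Finite V] {n : ℕ} (hφ : IsProperPartialEC G C φ)
    (hmissing : ∀ x, ∃ c ∈ C, c ∈ missingColors φ x) (F : Fan G φ u n) :
    IsExtendable G C φ s(u, F.v 0) := by
  obtain ⟨α, hαC, hαu⟩ := hmissing u
  obtain ⟨c, hcC, hcv⟩ := hmissing (F.v n)
  by_cases hcu : c ∈ missingColors φ u
  · exact F.isExtendable_of_mem_missingColors hφ hcC hcu hcv
  by_cases hold : ∃ j < n, F.β j = c
  · obtain ⟨j, hj, rfl⟩ := hold
    exact F.isExtendable_of_β_mem_missingColors hφ hαC hαu hj hcv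
  simp only [not_exists, not_and] at hold
  obtain ⟨y, hy⟩ : ∃ y, φ s(u, y) = some c := by simpa [missingColors] using hcu
  have hy_new : ∀ i ≤ n, F.v i ≠ y := by
    rintro (_ | i) hi rfl
    · simp [F.uncolored] at hy
    · exact hold i hi (Option.some_inj.mp ((F.color_succ i hi).symm.trans hy))
  exact (F.snoc (hφ.adj hy) hy hcv hy_new).isExtendable hφ hmissing
termination_by Nat.card V - n
decreasing_by have := F.succ_le_card; omega

end Fan

end

theorem extend_partial_coloring_general {V : Type*} [Fintype V]
    (G : SimpleGraph V) [DecidableRel G.Adj] (Δ : ℕ)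
    (hΔ : ∀ v : V, G.degree v ≤ Δ)
    (φ : Sym2 V → Option ℕ)
    (hφ : IsProperPartialEC G (Set.Icc 1 (Δ + 1)) φ)
    (u v : V) (huv : G.Adj u v) (hun : φ s(u, v) = none) :
    ∃ φ' : Sym2 V → Option ℕ,
      IsProperPartialEC G (Set.Icc 1 (Δ + 1)) φ' ∧
      {e : Sym2 V | φ' e ≠ none} = insert s(u, v) {e : Sym2 V | φ e ≠ none} :=
  (Fan.single huv hun).isExtendable hφ fun x =>
    hφ.exists_mem_missingColors x (by simpa using Nat.lt_succ_of_le (hΔ x))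

/-- **Fan-repair extension lemma.** If `G` has maximum degree at most `Δ`, any proper
partial edge coloring with color set `{1, …, Δ+1}` can be modified so that one
additional prescribed uncolored edge becomes colored, while all previously colored
edges remain colored (and no others). -/
theorem extend_partial_coloring {V : Type*} [Fintype V] [DecidableEq V]
    (G : SimpleGraph V) [DecidableRel G.Adj] (Δ : ℕ)
    (hΔ : ∀ v : V, G.degree v ≤ Δ)
    (φ : Sym2 V → Option ℕ)
    (hφ : IsProperPartialEC G (Set.Icc 1 (Δ + 1)) φ)
    (u v : V) (huv : G.Adj u v) (hun : φ s(u, v) = none) :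
    ∃ φ' : Sym2 V → Option ℕ,
      IsProperPartialEC G (Set.Icc 1 (Δ + 1)) φ' ∧
      {e : Sym2 V | φ' e ≠ none} = insert s(u, v) {e : Sym2 V | φ e ≠ none} :=
  extend_partial_coloring_general G Δ hΔ φ hφ u v huv hun
end

section
/- (Correctness of the augment operation.) Let φ be a proper partial edge coloring of a finite simple graph G with color set C, let α, β ∈ C be distinct colors, and let P be an αβ-alternating path. Then the coloring φ' obtained from φ by augmenting P (recoloring every α-colored edge of P with β and every β-colored edge of P with α, leaving all other edges unchanged) is again a proper partial edge coloring of G with the same set of colored edges. -/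
/-- A maximal `αβ`-alternating path. -/
def IsMaxAltPath {V : Type*} (G : SimpleGraph V) (φ : Sym2 V → Option ℕ)
    (α β : ℕ) {u v : V} (p : G.Walk u v) : Prop :=
  p.IsPath ∧
  (∀ e ∈ p.edges, φ e = some α ∨ φ e = some β) ∧
  List.Chain' (fun e₁ e₂ => φ e₁ ≠ φ e₂) p.edges ∧
  (∀ e ∈ G.edgeSet, u ∈ e → (φ e = some α ∨ φ e = some β) → e ∈ p.edges) ∧
  (∀ e ∈ G.edgeSet, v ∈ e → (φ e = some α ∨ φ e = some β) → e ∈ p.edges)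

/-- Augmenting along the list of edges `es`: recolor every `α`-colored edge of `es`
with `β` and every `β`-colored edge of `es` with `α`, leaving all other edges
unchanged. -/
def augmentColoring {V : Type*} [DecidableEq V] (φ : Sym2 V → Option ℕ)
    (α β : ℕ) (es : List (Sym2 V)) : Sym2 V → Option ℕ :=
  fun e => if e ∈ es then
    (if φ e = some α then some β else if φ e = some β then some α else φ e)
  else φ e


open SimpleGraph

lemma mem_support_of_mem_edges' {V : Type*} {G : SimpleGraph V} {u v x : V}
    (p : G.Walk u v) {e : Sym2 V} (he : e ∈ p.edges) (hx : x ∈ e) : x ∈ p.support := by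
  induction e with
  | h a b =>
    rcases Sym2.mem_iff.mp hx with rfl | rfl
    · exact p.fst_mem_support_of_mem_edges he
    · exact p.snd_mem_support_of_mem_edges he

lemma exists_other_edge {V : Type*} {G : SimpleGraph V} (φ : Sym2 V → Option ℕ)
    : ∀ {u v : V} (p : G.Walk u v), p.IsPath →
    List.Chain' (fun e₁ e₂ => φ e₁ ≠ φ e₂) p.edges →
    ∀ {x : V} {e : Sym2 V}, e ∈ p.edges → x ∈ e → x ≠ u → x ≠ v →
    ∃ f ∈ p.edges, f ≠ e ∧ x ∈ f ∧ φ f ≠ φ e := by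
  intro u v p
  induction p with
  | nil => intro _ _ x e he; simp at he
  | @cons u u' v h q ih =>
    intro hpath hch x e he hx hxu hxv
    rw [SimpleGraph.Walk.cons_isPath_iff] at hpath
    rw [SimpleGraph.Walk.edges_cons] at he hch
    rcases List.mem_cons.mp he with rfl | heq
    · -- e = s(u,u'), so x = u'
      have hx' : x = u' := by
        rcases Sym2.mem_iff.mp hx with rfl | rfl
        · exact absurd rfl hxu
        · rfl
      subst hx'
      cases q with
      | nil => exact absurd rfl hxv
      | @cons _ w _ h' q' =>
        rw [SimpleGraph.Walk.edges_cons] at hch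
        refine ⟨s(x, w), ?_, ?_, ?_, ?_⟩
        · simp [SimpleGraph.Walk.edges_cons]
        · intro hfe
          have hu : u ∈ s(x, w) := by rw [hfe]; simp
          rcases Sym2.mem_iff.mp hu with rfl | rfl
          · exact hxu rfl
          · exact hpath.2 (by simp)
        · simp
        · exact fun hc => (List.isChain_cons_cons.mp hch).1 hc.symm
    · -- e ∈ q.edges
      by_cases hxu' : x = u'
      · subst hxu'
        -- e is the first edge of q
        cases q with
        | nil => simp at heq
        | @cons _ w _ h' q' =>
          rw [SimpleGraph.Walk.edges_cons] at heq hch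
          have he1 : e = s(x, w) := by
            rcases List.mem_cons.mp heq with h1 | h1
            · exact h1
            · exfalso
              have : x ∈ q'.support := mem_support_of_mem_edges' q' h1 hx
              have hnd := hpath.1.support_nodup
              rw [SimpleGraph.Walk.support_cons] at hnd
              exact (List.nodup_cons.mp hnd).1 this
          refine ⟨s(u, x), by simp, ?_, by simp, ?_⟩
          · intro hfe
            have : u ∈ e := by rw [← hfe]; simp
            rcases List.mem_cons.mp heq with h1 | h1
            · exact hpath.2 (mem_support_of_mem_edges' _ (by simp [SimpleGraph.Walk.edges_cons, h1]) this)
            · exact hpath.2 (mem_support_of_mem_edges' _ (by simp [SimpleGraph.Walk.edges_cons, h1]) this)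
          · rw [he1]
            exact (List.isChain_cons_cons.mp hch).1
      · rcases ih hpath.1 hch.tail heq hx hxu' hxv with ⟨f, hf, hfe, hxf, hφ⟩
        exact ⟨f, by simp [SimpleGraph.Walk.edges_cons, hf], hfe, hxf, hφ⟩


/-- **Correctness of the augment operation.** Augmenting a maximal `αβ`-alternating
path yields again a proper partial edge coloring with the same set of colored edges. -/
theorem augment_proper {V : Type*} [Fintype V] [DecidableEq V]
    (G : SimpleGraph V) (C : Set ℕ) (φ : Sym2 V → Option ℕ)
    (hφ : IsProperPartialEC G C φ)
    (α β : ℕ) (hαβ : α ≠ β) (hαC : α ∈ C) (hβC : β ∈ C)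
    (u v : V) (p : G.Walk u v) (hp : IsMaxAltPath G φ α β p) :
    IsProperPartialEC G C (augmentColoring φ α β p.edges) ∧
    {e : Sym2 V | augmentColoring φ α β p.edges e ≠ none} =
      {e : Sym2 V | φ e ≠ none} := by
  obtain ⟨h1, h2, h3⟩ := hφ
  obtain ⟨hp1, hp2, hp3, hp4, hp5⟩ := hp
  set ψ := augmentColoring φ α β p.edges with hψ
  have hswap : ∀ e ∈ p.edges,
      (φ e = some α ∧ ψ e = some β) ∨ (φ e = some β ∧ ψ e = some α) := by
    intro e he
    rcases hp2 e he with hc | hc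
    · exact Or.inl ⟨hc, by simp [hψ, augmentColoring, he, hc]⟩
    · exact Or.inr ⟨hc, by simp [hψ, augmentColoring, he, hc, Ne.symm hαβ]⟩
  have hsame : ∀ e ∉ p.edges, ψ e = φ e := fun e he => by
    simp [hψ, augmentColoring, he]
  have hnone : ∀ e, ψ e = none ↔ φ e = none := by
    intro e
    by_cases he : e ∈ p.edges
    · rcases hswap e he with ⟨ha, hb⟩ | ⟨ha, hb⟩ <;> simp [ha, hb]
    · rw [hsame e he]
  have key : ∀ e₁ e₂ : Sym2 V, e₁ ∈ p.edges → e₂ ∉ p.edges →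
      (∃ x, x ∈ e₁ ∧ x ∈ e₂) → ∀ c, ψ e₁ = some c → ψ e₂ ≠ some c := by
    rintro e₁ e₂ he₁ he₂ ⟨x, hx1, hx2⟩ c hc1 hc2
    rw [hsame e₂ he₂] at hc2
    have he₂G : e₂ ∈ G.edgeSet := h1 e₂ (by rw [hc2]; simp)
    by_cases hxu : x = u
    · subst hxu
      refine he₂ (hp4 e₂ he₂G hx2 ?_)
      rcases hswap e₁ he₁ with ⟨_, hb⟩ | ⟨_, hb⟩
      · right; rw [Option.some_inj.mp (hc1.symm.trans hb)] at hc2; exact hc2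
      · left; rw [Option.some_inj.mp (hc1.symm.trans hb)] at hc2; exact hc2
    by_cases hxv : x = v
    · subst hxv
      refine he₂ (hp5 e₂ he₂G hx2 ?_)
      rcases hswap e₁ he₁ with ⟨_, hb⟩ | ⟨_, hb⟩
      · right; rw [Option.some_inj.mp (hc1.symm.trans hb)] at hc2; exact hc2
      · left; rw [Option.some_inj.mp (hc1.symm.trans hb)] at hc2; exact hc2
    obtain ⟨f, hf, hfe, hxf, hφf⟩ := exists_other_edge φ p hp1 hp3 he₁ hx1 hxu hxv
    have hfc : φ f = some c := by
      rcases hswap e₁ he₁ with ⟨ha, hb⟩ | ⟨ha, hb⟩ <;>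
        rcases hswap f hf with ⟨ha', _⟩ | ⟨ha', _⟩
      · exact absurd (ha'.trans ha.symm) hφf
      · rw [ha', Option.some_inj.mp (hb.symm.trans hc1)]
      · rw [ha', Option.some_inj.mp (hb.symm.trans hc1)]
      · exact absurd (ha'.trans ha.symm) hφf
    exact h3 f e₂ (fun h => he₂ (h ▸ hf)) ⟨x, hxf, hx2⟩ c hfc hc2
  refine ⟨⟨?_, ?_, ?_⟩, ?_⟩
  · intro e he
    exact h1 e (fun h => he ((hnone e).mpr h))
  · intro e c hc
    by_cases he : e ∈ p.edges
    · rcases hswap e he with ⟨_, hb⟩ | ⟨_, hb⟩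
      · rw [Option.some_inj.mp (hc.symm.trans hb)]; exact hβC
      · rw [Option.some_inj.mp (hc.symm.trans hb)]; exact hαC
    · exact h2 e c (by rw [← hsame e he]; exact hc)
  · intro e₁ e₂ hne hx c hc1 hc2
    by_cases he₁ : e₁ ∈ p.edges <;> by_cases he₂ : e₂ ∈ p.edges
    · rcases hswap e₁ he₁ with ⟨ha, hb⟩ | ⟨ha, hb⟩ <;>
        rcases hswap e₂ he₂ with ⟨ha', hb'⟩ | ⟨ha', hb'⟩
      · exact h3 e₁ e₂ hne hx α ha ha'
      · exact hαβ (Option.some_inj.mp ((hb'.symm.trans hc2).trans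
          (hb.symm.trans hc1).symm))
      · exact hαβ (Option.some_inj.mp ((hb.symm.trans hc1).trans
          (hb'.symm.trans hc2).symm))
      · exact h3 e₁ e₂ hne hx β ha ha'
    · exact key e₁ e₂ he₁ he₂ hx c hc1 hc2
    · obtain ⟨x, hx1, hx2⟩ := hx
      exact key e₂ e₁ he₂ he₁ ⟨x, hx2, hx1⟩ c hc2 hc1
    · rw [hsame e₁ he₁] at hc1
      rw [hsame e₂ he₂] at hc2
      exact h3 e₁ e₂ hne hx c hc1 hc2
  · ext e
    simp only [Set.mem_setOf_eq]
    exact not_congr (hnone e)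
end

section
/- (Arithmetic core of Lemma 6, the degree-splitting reduction.) Let Δ be a positive integer, let z ≥ 0 and ε be reals with z/Δ ≤ ε ≤ 1/8 and Δ > 16(z+8)/ε. Set ε' = ε / (32 · log_{4/3} Δ), define the sequence of reals Δ_0 = Δ and Δ_{i+1} = (1/2 + ε')·Δ_i + 4 for i ≥ 0, and let h be the smallest positive integer such that (1/2 + ε')^h · Δ ≤ 16(z+8)/ε. Then: (a) h ≤ log_{4/3} Δ; (b) (1/2 + ε')^h · Δ ≥ 8(z+8)/ε; (c) Δ_h ≤ (1 + ε/4)·(1/2 + ε')^h · Δ; and (d) 2^h · (Δ_h + z) ≤ (1 + ε)·Δ. -/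
open Real

/-- Auxiliary Bernoulli-type bound: `(1+x)^n ≤ 1 + 2nx` when `nx ≤ 1/2`. -/
lemma aux_pow_one_add_le (x : ℝ) (hx : 0 ≤ x) :
    ∀ n : ℕ, (n : ℝ) * x ≤ 1 / 2 → (1 + x) ^ n ≤ 1 + 2 * n * x := by
  intro n
  induction n with
  | zero => simp
  | succ m ih =>
    intro hle
    have hm : (m : ℝ) * x ≤ 1 / 2 := by
      have : (m : ℝ) ≤ (m + 1 : ℕ) := by push_cast; linarith
      nlinarith [mul_le_mul_of_nonneg_right this hx]
    have ihm := ih hm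
    have hpos : (0 : ℝ) ≤ 1 + 2 * m * x := by positivity
    have h1 : (1 + x) ^ (m + 1) = (1 + x) ^ m * (1 + x) := pow_succ _ _
    have h2 : (1 + x) ^ m * (1 + x) ≤ (1 + 2 * m * x) * (1 + x) := by
      apply mul_le_mul_of_nonneg_right ihm (by linarith)
    have hcast : ((m + 1 : ℕ) : ℝ) = (m : ℝ) + 1 := by push_cast; ring
    rw [h1, hcast]
    have hmx : 2 * ((m : ℝ) * x) * x ≤ x := by
      have hx2 : (m : ℝ) * x * x ≤ (1 / 2) * x :=
        mul_le_mul_of_nonneg_right hm hx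
      linarith
    nlinarith [h2]

set_option maxHeartbeats 2000000 in
/-- **Arithmetic core of the degree-splitting reduction (Lemma 6).**
With `ε' = ε / (32·log_{4/3} Δ)`, `Δ_0 = Δ`, `Δ_{i+1} = (1/2 + ε')·Δ_i + 4`, and `h`
the smallest positive integer with `(1/2 + ε')^h · Δ ≤ 16(z+8)/ε`, we have
(a) `h ≤ log_{4/3} Δ`;  (b) `(1/2 + ε')^h · Δ ≥ 8(z+8)/ε`;
(c) `Δ_h ≤ (1 + ε/4)·(1/2 + ε')^h·Δ`;  (d) `2^h·(Δ_h + z) ≤ (1 + ε)·Δ`. -/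
theorem degree_splitting_arithmetic
    (Δ : ℕ) (hΔpos : 1 ≤ Δ) (z ε : ℝ) (hz : 0 ≤ z)
    (hεlow : z / (Δ : ℝ) ≤ ε) (hεhigh : ε ≤ 1 / 8)
    (hΔbig : (Δ : ℝ) > 16 * (z + 8) / ε)
    (ε' : ℝ) (hε' : ε' = ε / (32 * Real.logb (4 / 3) (Δ : ℝ)))
    (D : ℕ → ℝ) (hD0 : D 0 = (Δ : ℝ))
    (hDrec : ∀ i : ℕ, D (i + 1) = (1 / 2 + ε') * D i + 4)
    (h : ℕ) (hh1 : 1 ≤ h)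
    (hhle : (1 / 2 + ε') ^ h * (Δ : ℝ) ≤ 16 * (z + 8) / ε)
    (hhmin : ∀ j : ℕ, 1 ≤ j → j < h →
      (1 / 2 + ε') ^ j * (Δ : ℝ) > 16 * (z + 8) / ε) :
    (h : ℝ) ≤ Real.logb (4 / 3) (Δ : ℝ) ∧
    (1 / 2 + ε') ^ h * (Δ : ℝ) ≥ 8 * (z + 8) / ε ∧
    D h ≤ (1 + ε / 4) * ((1 / 2 + ε') ^ h * (Δ : ℝ)) ∧
    2 ^ h * (D h + z) ≤ (1 + ε) * (Δ : ℝ) := by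
  have hΔ0 : (0 : ℝ) < (Δ : ℝ) := by exact_mod_cast hΔpos
  have hε0 : 0 ≤ ε := le_trans (div_nonneg hz hΔ0.le) hεlow
  -- ε is strictly positive
  have hεpos : 0 < ε := by
    rcases hε0.lt_or_eq with h' | h'
    · exact h'
    · exfalso
      have hε'0 : ε' = 0 := by rw [hε', ← h', zero_div]
      have h0 : 16 * (z + 8) / ε = 0 := by rw [← h', div_zero]
      rw [h0, hε'0] at hhle
      have : (0 : ℝ) < (1 / 2 + 0 : ℝ) ^ h * (Δ : ℝ) := by positivity
      linarith
  -- the threshold is at least 1024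
  have hB1024 : (1024 : ℝ) ≤ 16 * (z + 8) / ε := by
    rw [le_div_iff₀ hεpos]; nlinarith
  have hΔ1024 : (1024 : ℝ) < (Δ : ℝ) := lt_of_le_of_lt hB1024 hΔbig
  set L := Real.logb (4 / 3) (Δ : ℝ) with hL
  have hb43 : (1 : ℝ) < 4 / 3 := by norm_num
  have hLpos : 0 < L := Real.logb_pos hb43 (by linarith)
  have hL1 : 1 ≤ L := by
    rw [hL, Real.le_logb_iff_rpow_le hb43 hΔ0, Real.rpow_one]; linarith
  have hε'pos : 0 < ε' := by
    rw [hε']; exact div_pos hεpos (by linarith)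
  have hε'le : ε' ≤ 1 / 256 := by
    rw [hε', div_le_iff₀ (by nlinarith : (0 : ℝ) < 32 * L)]
    nlinarith
  have hqpos : (0 : ℝ) < 1 / 2 + ε' := by linarith
  -- the previous power is above the threshold
  obtain ⟨k, rfl⟩ : ∃ k, h = k + 1 := ⟨h - 1, (Nat.succ_pred_eq_of_pos hh1).symm⟩
  have hstep : 16 * (z + 8) / ε < (1 / 2 + ε') ^ k * (Δ : ℝ) := by
    cases k with
    | zero => simpa using hΔbig
    | succ m => exact hhmin (m + 1) (by omega) (by omega)
  have hXpos : (0 : ℝ) < (1 / 2 + ε') ^ k * (Δ : ℝ) := by positivity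
  -- part (b)
  have hpowsucc : (1 / 2 + ε') ^ (k + 1) * (Δ : ℝ)
      = (1 / 2 + ε') * ((1 / 2 + ε') ^ k * (Δ : ℝ)) := by ring
  have partb : (1 / 2 + ε') ^ (k + 1) * (Δ : ℝ) ≥ 8 * (z + 8) / ε := by
    rw [hpowsucc]
    have h8 : 8 * (z + 8) / ε = (16 * (z + 8) / ε) / 2 := by ring
    rw [h8]
    nlinarith [mul_le_mul_of_nonneg_right hε'pos.le hXpos.le, hstep]
  -- part (a)
  have h43k : (0 : ℝ) < (4 / 3 : ℝ) ^ k := by positivity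
  have h43q : ((4 / 3 : ℝ) * (1 / 2 + ε')) ^ k ≤ 1 := by
    apply pow_le_one₀ (by positivity)
    linarith
  have hM1024 : 1024 * (4 / 3 : ℝ) ^ k < (Δ : ℝ) := by
    calc 1024 * (4 / 3 : ℝ) ^ k
        < ((1 / 2 + ε') ^ k * (Δ : ℝ)) * (4 / 3 : ℝ) ^ k := by
          apply mul_lt_mul_of_pos_right _ h43k
          linarith
      _ = ((4 / 3 : ℝ) * (1 / 2 + ε')) ^ k * (Δ : ℝ) := by
          rw [mul_pow]; ring
      _ ≤ 1 * (Δ : ℝ) := mul_le_mul_of_nonneg_right h43q hΔ0.le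
      _ = (Δ : ℝ) := one_mul _
  have hpow43 : (4 / 3 : ℝ) ^ (k + 1) ≤ (Δ : ℝ) := by
    have : (4 / 3 : ℝ) ^ (k + 1) = (4 / 3) * (4 / 3 : ℝ) ^ k := by ring
    nlinarith
  have parta : ((k + 1 : ℕ) : ℝ) ≤ L := by
    rw [hL, Real.le_logb_iff_rpow_le hb43 hΔ0, Real.rpow_natCast]
    exact hpow43
  -- part (c)
  have hDbound : ∀ i : ℕ, D i ≤ (1 / 2 + ε') ^ i * (Δ : ℝ) + 9 := by
    intro i
    induction i with
    | zero => rw [hD0, pow_zero, one_mul]; linarith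
    | succ n ih =>
      rw [hDrec n]
      have hmul := mul_le_mul_of_nonneg_left ih hqpos.le
      have hpn : (0 : ℝ) ≤ (1 / 2 + ε') ^ n * (Δ : ℝ) := by positivity
      have : (1 / 2 + ε') ^ (n + 1) * (Δ : ℝ)
          = (1 / 2 + ε') * ((1 / 2 + ε') ^ n * (Δ : ℝ)) := by ring
      rw [this]
      linarith [hε'le]
  have hεP : 8 * (z + 8) ≤ ε * ((1 / 2 + ε') ^ (k + 1) * (Δ : ℝ)) := by
    have := (div_le_iff₀ hεpos).mp partb
    linarith
  have partc : D (k + 1) ≤ (1 + ε / 4) * ((1 / 2 + ε') ^ (k + 1) * (Δ : ℝ)) := by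
    have h1 := hDbound (k + 1)
    have h9 : 9 ≤ ε / 4 * ((1 / 2 + ε') ^ (k + 1) * (Δ : ℝ)) := by linarith
    linarith
  -- part (d)
  have hε'L : ε' * L = ε / 32 := by
    rw [hε']; field_simp
  have h2εh : ((k + 1 : ℕ) : ℝ) * (2 * ε') ≤ ε / 16 := by
    have := mul_le_mul_of_nonneg_right parta (by linarith : (0 : ℝ) ≤ 2 * ε')
    nlinarith
  have hhalf : ((k + 1 : ℕ) : ℝ) * (2 * ε') ≤ 1 / 2 := by linarith
  have hM := aux_pow_one_add_le (2 * ε') (by linarith) (k + 1) hhalf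
  have hMle : (1 + 2 * ε') ^ (k + 1) ≤ 1 + ε / 8 := by
    have : 2 * ((k + 1 : ℕ) : ℝ) * (2 * ε') ≤ ε / 8 := by linarith
    linarith
  have hMpos : (0 : ℝ) < (1 + 2 * ε') ^ (k + 1) := by positivity
  have h2pow : (2 : ℝ) ^ (k + 1) * (1 / 2 + ε') ^ (k + 1) = (1 + 2 * ε') ^ (k + 1) := by
    rw [← mul_pow]; ring_nf
  have hzle : z ≤ ε / 8 * ((1 / 2 + ε') ^ (k + 1) * (Δ : ℝ)) := by linarith
  have h2kpos : (0 : ℝ) < 2 ^ (k + 1) := by positivity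
  have partd : 2 ^ (k + 1) * (D (k + 1) + z) ≤ (1 + ε) * (Δ : ℝ) := by
    have hDz : D (k + 1) + z ≤ (1 + 3 * ε / 8) * ((1 / 2 + ε') ^ (k + 1) * (Δ : ℝ)) := by
      linarith
    calc 2 ^ (k + 1) * (D (k + 1) + z)
        ≤ 2 ^ (k + 1) * ((1 + 3 * ε / 8) * ((1 / 2 + ε') ^ (k + 1) * (Δ : ℝ))) :=
          mul_le_mul_of_nonneg_left hDz h2kpos.le
      _ = (1 + 3 * ε / 8) * ((2 ^ (k + 1) * (1 / 2 + ε') ^ (k + 1)) * (Δ : ℝ)) := by ring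
      _ = (1 + 3 * ε / 8) * ((1 + 2 * ε') ^ (k + 1) * (Δ : ℝ)) := by rw [h2pow]
      _ ≤ (1 + 3 * ε / 8) * ((1 + ε / 8) * (Δ : ℝ)) := by
          apply mul_le_mul_of_nonneg_left _ (by linarith)
          exact mul_le_mul_of_nonneg_right hMle hΔ0.le
      _ ≤ (1 + ε) * (Δ : ℝ) := by
          have hfact : (1 + 3 * ε / 8) * (1 + ε / 8) ≤ 1 + ε := by nlinarith
          calc (1 + 3 * ε / 8) * ((1 + ε / 8) * (Δ : ℝ))
              = ((1 + 3 * ε / 8) * (1 + ε / 8)) * (Δ : ℝ) := by ring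
            _ ≤ (1 + ε) * (Δ : ℝ) := mul_le_mul_of_nonneg_right hfact hΔ0.le
  exact ⟨parta, partb, partc, partd⟩
end

section
/- (Chernoff tail computation from the randomized load-balancing analysis.) Let c > 0. Let n ≥ 2 and Δ ≥ 1 be integers and t ≥ 1, T ≥ 3 be reals satisfying T ≥ 700·e²·Δ⁷·t and T ≥ 7c·ln n. Let Y_1, …, Y_m, with m = ⌈T/2⌉, be independent random variables on a probability space, each taking values in {0,1} with P(Y_i = 1) ≤ 150t/T for every i. Then P(Y_1 + ⋯ + Y_m > T/7) ≤ e^{−T/7} · Δ^{−T} ≤ n^{−c} · Δ^{−T}. -/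
open MeasureTheory ProbabilityTheory Real

/-!
Chernoff's method with the exponent `s = log (e² Δ⁷) = 2 + 7 log Δ`. A `{0,1}`-valued variable
with `P(Y = 1) ≤ p` has `E[e^{sY}] = 1 + (e^s - 1) P(Y = 1) ≤ exp ((e^s - 1) p)`, so by independence
`P(∑ Y_i ≥ T/7) ≤ exp (-s T/7 + m (e^s - 1) p)`. With `m ≤ T/2 + 1`, `p = 150t/T` and
`700 e² Δ⁷ t ≤ T`, `T ≥ 6`, the second term is at most `T/7`, leaving `exp (-T/7 - T log Δ)`.
The comparison with `n^{-c}` is just `c log n ≤ T/7`.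
-/

namespace ProbabilityTheory

lemma exp_mul_eq_indicator_of_zero_or_one {Ω : Type*} {X : Ω → ℝ}
    (h01 : ∀ ω, X ω = 0 ∨ X ω = 1) (s : ℝ) :
    (fun ω => exp (s * X ω)) = fun ω => 1 + (exp s - 1) * {ω | X ω = 1}.indicator 1 ω := by
  funext ω
  rcases h01 ω with h | h <;> simp [h]

variable {Ω ι : Type*} [MeasurableSpace Ω] {μ : Measure Ω} {X : Ω → ℝ}

lemma integrable_exp_mul_of_zero_or_one [IsFiniteMeasure μ] (hX : Measurable X)
    (h01 : ∀ ω, X ω = 0 ∨ X ω = 1) (s : ℝ) : Integrable (fun ω => exp (s * X ω)) μ := by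
  rw [exp_mul_eq_indicator_of_zero_or_one h01]
  exact (integrable_const 1).add
    (((integrable_const 1).indicator (hX (measurableSet_singleton 1))).const_mul _)

lemma mgf_eq_of_zero_or_one [IsProbabilityMeasure μ] (hX : Measurable X)
    (h01 : ∀ ω, X ω = 0 ∨ X ω = 1) (s : ℝ) :
    mgf X μ s = 1 + (exp s - 1) * μ.real {ω | X ω = 1} := by
  have hset : MeasurableSet {ω | X ω = 1} := hX (measurableSet_singleton 1)
  rw [mgf, exp_mul_eq_indicator_of_zero_or_one h01, integral_add (integrable_const 1)
    (((integrable_const 1).indicator hset).const_mul _), integral_const_mul,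
    integral_indicator_one hset]
  simp

lemma mgf_le_exp_of_zero_or_one [IsProbabilityMeasure μ] (hX : Measurable X)
    (h01 : ∀ ω, X ω = 0 ∨ X ω = 1) {s p : ℝ} (hs : 0 ≤ s) (hp : 0 ≤ p)
    (hprob : μ {ω | X ω = 1} ≤ ENNReal.ofReal p) :
    mgf X μ s ≤ exp ((exp s - 1) * p) := by
  have hes : 0 ≤ exp s - 1 := sub_nonneg.2 (one_le_exp hs)
  calc mgf X μ s = 1 + (exp s - 1) * μ.real {ω | X ω = 1} := mgf_eq_of_zero_or_one hX h01 s
    _ ≤ 1 + (exp s - 1) * p := by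
      gcongr
      exact ENNReal.toReal_le_of_le_ofReal hp hprob
    _ ≤ exp ((exp s - 1) * p) := by linarith [add_one_le_exp ((exp s - 1) * p)]

theorem measureReal_sum_ge_le_exp_of_zero_or_one [Fintype ι] [IsProbabilityMeasure μ]
    {Y : ι → Ω → ℝ} (hmeas : ∀ i, Measurable (Y i)) (hindep : iIndepFun Y μ)
    (h01 : ∀ i ω, Y i ω = 0 ∨ Y i ω = 1) {s p : ℝ} (hs : 0 ≤ s) (hp : 0 ≤ p)
    (hprob : ∀ i, μ {ω | Y i ω = 1} ≤ ENNReal.ofReal p) (a : ℝ) :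
    μ.real {ω | a ≤ ∑ i, Y i ω} ≤ exp (-s * a + Fintype.card ι * ((exp s - 1) * p)) := by
  have hint : Integrable (fun ω => exp (s * (∑ i, Y i) ω)) μ :=
    hindep.integrable_exp_mul_sum hmeas
      fun i _ => integrable_exp_mul_of_zero_or_one (hmeas i) (h01 i) s
  calc μ.real {ω | a ≤ ∑ i, Y i ω} = μ.real {ω | a ≤ (∑ i, Y i) ω} := by
        simp only [Finset.sum_apply]
    _ ≤ exp (-s * a) * mgf (∑ i, Y i) μ s := measure_ge_le_exp_mul_mgf a hs hint
    _ = exp (-s * a) * ∏ i, mgf (Y i) μ s := by rw [hindep.mgf_sum hmeas]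
    _ ≤ exp (-s * a) * ∏ _i : ι, exp ((exp s - 1) * p) := by
      gcongr with i
      · exact fun i _ => mgf_nonneg
      · exact mgf_le_exp_of_zero_or_one (hmeas i) (h01 i) hs hp (hprob i)
    _ = exp (-s * a + Fintype.card ι * ((exp s - 1) * p)) := by
      rw [Finset.prod_const, ← exp_nat_mul, ← exp_add, Finset.card_univ]

end ProbabilityTheory

lemma ceil_half_mul_sub_one_mul_le {A t T : ℝ} (hA : 1 ≤ A) (ht : 0 ≤ t) (hT : 6 ≤ T)
    (hAT : 700 * A * t ≤ T) :
    (⌈T / 2⌉₊ : ℝ) * ((A - 1) * (150 * t / T)) ≤ T / 7 := by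
  have hT0 : 0 < T := by linarith
  have hm : (⌈T / 2⌉₊ : ℝ) ≤ T / 2 + 1 := (Nat.ceil_lt_add_one (by positivity)).le
  calc (⌈T / 2⌉₊ : ℝ) * ((A - 1) * (150 * t / T)) ≤ (T / 2 + 1) * (A * (150 * t / T)) := by
        gcongr
        linarith
    _ = 75 * A * t + 150 * A * t / T := by field_simp; ring
    _ ≤ T / 7 := by
      have : 150 * A * t / T ≤ 3 / 14 := by rw [div_le_iff₀ hT0]; linarith
      linarith

theorem chernoff_tail_load_balancing_general
    (c : ℝ) (n Δ : ℕ) (hn : 2 ≤ n) (hΔ : 1 ≤ Δ)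
    (t T : ℝ) (ht : 1 ≤ t)
    (hT1 : 700 * Real.exp 1 ^ 2 * (Δ : ℝ) ^ (7 : ℕ) * t ≤ T)
    (hT2 : 7 * c * Real.log n ≤ T)
    {Ω : Type*} [MeasurableSpace Ω] (μ : Measure Ω) [IsProbabilityMeasure μ]
    (Y : Fin ⌈T / 2⌉₊ → Ω → ℝ)
    (hmeas : ∀ i, Measurable (Y i))
    (hindep : iIndepFun Y μ)
    (h01 : ∀ i ω, Y i ω = 0 ∨ Y i ω = 1)
    (hprob : ∀ i, μ {ω | Y i ω = 1} ≤ ENNReal.ofReal (150 * t / T)) :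
    μ {ω | T / 7 < ∑ i, Y i ω} ≤
        ENNReal.ofReal (Real.exp (-(T / 7)) * (Δ : ℝ) ^ (-T)) ∧
    Real.exp (-(T / 7)) * (Δ : ℝ) ^ (-T) ≤ (n : ℝ) ^ (-c) * (Δ : ℝ) ^ (-T) := by
  have hΔ0 : (0 : ℝ) < Δ := by exact_mod_cast hΔ
  have hA : 1 ≤ exp 1 ^ 2 * (Δ : ℝ) ^ 7 :=
    one_le_mul_of_one_le_of_one_le (one_le_pow₀ (one_le_exp zero_le_one))
      (one_le_pow₀ (by exact_mod_cast hΔ))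
  have hT : 6 ≤ T := by nlinarith
  have hexp : exp (2 + 7 * log Δ) = exp 1 ^ 2 * (Δ : ℝ) ^ 7 := by
    rw [exp_add, ← exp_log hΔ0, ← exp_nat_mul, ← exp_nat_mul, log_exp]
    norm_num
  have htail := measureReal_sum_ge_le_exp_of_zero_or_one hmeas hindep h01
    (s := 2 + 7 * log Δ) (by positivity) (by positivity) hprob (T / 7)
  have hdrift := ceil_half_mul_sub_one_mul_le (A := exp 1 ^ 2 * (Δ : ℝ) ^ 7) (t := t)
    hA (by positivity) hT (by linarith)
  refine ⟨?_, ?_⟩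
  · calc μ {ω | T / 7 < ∑ i, Y i ω} ≤ μ {ω | T / 7 ≤ ∑ i, Y i ω} :=
          measure_mono fun ω (h : T / 7 < _) => h.le
      _ = ENNReal.ofReal (μ.real {ω | T / 7 ≤ ∑ i, Y i ω}) :=
          (ofReal_measureReal (measure_ne_top μ _)).symm
      _ ≤ ENNReal.ofReal (exp (-(T / 7)) * (Δ : ℝ) ^ (-T)) := by
        refine ENNReal.ofReal_le_ofReal (htail.trans ?_)
        rw [rpow_def_of_pos hΔ0, ← exp_add, hexp, Fintype.card_fin, exp_le_exp]
        linarith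
  · have hn0 : (0 : ℝ) < n := by exact_mod_cast (by omega : 0 < n)
    rw [rpow_def_of_pos hn0]
    gcongr
    linarith

/-- **Chernoff tail computation from the randomized load-balancing analysis.**
If `T ≥ 700·e²·Δ⁷·t` and `T ≥ 7c·ln n`, and `Y_1, …, Y_{⌈T/2⌉}` are independent
`{0,1}`-valued random variables with `P(Y_i = 1) ≤ 150t/T`, then
`P(∑ Y_i > T/7) ≤ e^{−T/7}·Δ^{−T} ≤ n^{−c}·Δ^{−T}`. -/
theorem chernoff_tail_load_balancing
    (c : ℝ) (hc : 0 < c) (n Δ : ℕ) (hn : 2 ≤ n) (hΔ : 1 ≤ Δ)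
    (t T : ℝ) (ht : 1 ≤ t) (hT3 : 3 ≤ T)
    (hT1 : 700 * Real.exp 1 ^ 2 * (Δ : ℝ) ^ (7 : ℕ) * t ≤ T)
    (hT2 : 7 * c * Real.log n ≤ T)
    {Ω : Type*} [MeasurableSpace Ω] (μ : Measure Ω) [IsProbabilityMeasure μ]
    (Y : Fin ⌈T / 2⌉₊ → Ω → ℝ)
    (hmeas : ∀ i, Measurable (Y i))
    (hindep : iIndepFun Y μ)
    (h01 : ∀ i ω, Y i ω = 0 ∨ Y i ω = 1)
    (hprob : ∀ i, μ {ω | Y i ω = 1} ≤ ENNReal.ofReal (150 * t / T)) :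
    μ {ω | T / 7 < ∑ i, Y i ω} ≤
        ENNReal.ofReal (Real.exp (-(T / 7)) * (Δ : ℝ) ^ (-T)) ∧
    Real.exp (-(T / 7)) * (Δ : ℝ) ^ (-T) ≤ (n : ℝ) ^ (-c) * (Δ : ℝ) ^ (-T) :=
  chernoff_tail_load_balancing_general c n Δ hn hΔ t T ht hT1 hT2 μ Y hmeas hindep h01 hprob
end

section
/- (Deterministic greedy balls-into-bins bound, the combinatorial core of the derandomized load-balancing step.) There is a universal constant K > 0 with the following property. Let V be a finite set of n ≥ 3 bins, let λ ≥ 2 be a real, and let t ≥ 1 and T be integers with T ≥ 2tλ. Consider any deterministic process over rounds q = 1, …, t: all loads start at 0; in round q a finite collection of balls is presented, each ball b equipped with a set B_b ⊆ V of at least T candidate bins, such that the candidate sets of distinct balls presented in the same round are pairwise disjoint; each ball b is irrevocably placed into some candidate bin f(b) ∈ B_b whose load at the start of round q is minimum among bins in B_b (ties broken arbitrarily), and the load of f(b) increases by one. Then, for every such sequence of rounds and every such greedy placement, at the end of round t every bin has load at most K · ln n / (ln λ + ln ln n). -/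
/-! Let `N_q(j)` be the number of bins of load at least `j` at the start of round `q`. A bin
that reaches load `j + 1` during round `q` receives a ball all of whose candidates have load at
least `j`; these candidate sets are disjoint and have at least `T` elements, so
`N_{q+1}(j+1) ≤ N_q(j+1) + N_q(j) / T`, whence `T^j N_q(j) ≤ n C(q, j)`. A bin of final load `ℓ`
thus gives `ℓ! (λt)^ℓ ≤ ℓ! T^ℓ ≤ n t^ℓ`, i.e. `ℓ! λ^ℓ ≤ n`, and `ℓ! ≥ (ℓ/e)^ℓ` turns this into
`ℓ (ln λ + ln ln n) ≤ 3 ln n`. -/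

open Finset Real
open scoped Nat

namespace GreedyBalls

section Loads

variable {V ι : Type*} [Fintype ι] [DecidableEq V] (rnd : ι → ℕ) (f : ι → V)

def load (q : ℕ) (u : V) : ℕ := #{b | rnd b < q ∧ f b = u}

@[simp]
lemma load_zero (u : V) : load rnd f 0 u = 0 := by
  simp [load]

lemma load_succ (q : ℕ) (u : V) :
    load rnd f (q + 1) u = load rnd f q u + #{b | rnd b = q ∧ f b = u} := by
  classical
  rw [load, load, ← card_union_of_disjoint]
  · congr 1
    ext b
    simp only [mem_filter, mem_univ, true_and, mem_union, Nat.lt_succ_iff_lt_or_eq, or_and_right]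
  · exact disjoint_filter.2 fun b _ h h' => h.1.ne h'.1

variable {rnd f} {cand : ι → Finset V}

lemma card_filter_round_eq_le_one
    (hdisj : ∀ b b', b ≠ b' → rnd b = rnd b' → Disjoint (cand b) (cand b'))
    (hmem : ∀ b, f b ∈ cand b) (q : ℕ) (u : V) : #{b | rnd b = q ∧ f b = u} ≤ 1 := by
  refine card_le_one.2 fun b hb b' hb' => ?_
  simp only [mem_filter, mem_univ, true_and] at hb hb'
  by_contra hne
  exact disjoint_left.1 (hdisj b b' hne (hb.1.trans hb'.1.symm)) (hb.2 ▸ hmem b) (hb'.2 ▸ hmem b')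

variable [Fintype V]

lemma card_load_succ_ge_le
    (hdisj : ∀ b b', b ≠ b' → rnd b = rnd b' → Disjoint (cand b) (cand b'))
    (hmem : ∀ b, f b ∈ cand b) (q j : ℕ) :
    #{u | j + 1 ≤ load rnd f (q + 1) u} ≤
      #{u | j + 1 ≤ load rnd f q u} + #{b | rnd b = q ∧ j ≤ load rnd f q (f b)} := by
  refine (card_le_card fun u hu => ?_).trans <| (card_union_le _ (image f _)).trans <|
    Nat.add_le_add_left card_image_le _
  simp only [mem_filter, mem_univ, true_and, mem_union, mem_image] at hu ⊢
  by_cases hold : j + 1 ≤ load rnd f q u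
  · exact Or.inl hold
  have hle := card_filter_round_eq_le_one hdisj hmem q u
  rw [load_succ] at hu
  obtain ⟨b, hb⟩ : (filter (fun b => rnd b = q ∧ f b = u) univ).Nonempty :=
    card_pos.1 (by omega)
  simp only [mem_filter, mem_univ, true_and] at hb
  exact Or.inr ⟨b, ⟨hb.1, by rw [hb.2]; omega⟩, hb.2⟩

lemma mul_card_le_card_load_ge {T : ℕ} (hcard : ∀ b, T ≤ #(cand b))
    (hdisj : ∀ b b', b ≠ b' → rnd b = rnd b' → Disjoint (cand b) (cand b'))
    (hgreedy : ∀ b, ∀ v ∈ cand b, load rnd f (rnd b) (f b) ≤ load rnd f (rnd b) v) (q j : ℕ) :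
    T * #{b | rnd b = q ∧ j ≤ load rnd f q (f b)} ≤ #{u | j ≤ load rnd f q u} := by
  set S : Finset ι := {b | rnd b = q ∧ j ≤ load rnd f q (f b)}
  have hS : ∀ b ∈ S, rnd b = q ∧ j ≤ load rnd f q (f b) := fun b hb => by
    simpa [S] using hb
  have hpair : (S : Set ι).PairwiseDisjoint cand := fun b hb b' hb' hne =>
    hdisj b b' hne ((hS b hb).1.trans (hS b' hb').1.symm)
  calc T * #S = ∑ _b ∈ S, T := by rw [sum_const, smul_eq_mul, mul_comm]
    _ ≤ ∑ b ∈ S, #(cand b) := sum_le_sum fun b _ => hcard b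
    _ = #(S.biUnion cand) := (card_biUnion hpair).symm
    _ ≤ #{u | j ≤ load rnd f q u} := card_le_card fun v hv => by
      obtain ⟨b, hb, hvb⟩ := mem_biUnion.1 hv
      obtain ⟨rfl, hj⟩ := hS b hb
      simpa using hj.trans (hgreedy b v hvb)

theorem pow_mul_card_load_ge_le {T : ℕ} (hcard : ∀ b, T ≤ #(cand b))
    (hdisj : ∀ b b', b ≠ b' → rnd b = rnd b' → Disjoint (cand b) (cand b'))
    (hmem : ∀ b, f b ∈ cand b)
    (hgreedy : ∀ b, ∀ v ∈ cand b, load rnd f (rnd b) (f b) ≤ load rnd f (rnd b) v) (q j : ℕ) :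
    T ^ j * #{u | j ≤ load rnd f q u} ≤ Fintype.card V * q.choose j := by
  induction q generalizing j with
  | zero => cases j <;> simp
  | succ q ih =>
    cases j with
    | zero => simp
    | succ j =>
      calc T ^ (j + 1) * #{u | j + 1 ≤ load rnd f (q + 1) u}
          ≤ T ^ (j + 1) *
              (#{u | j + 1 ≤ load rnd f q u} + #{b | rnd b = q ∧ j ≤ load rnd f q (f b)}) := by
            grw [card_load_succ_ge_le hdisj hmem]
        _ = T ^ (j + 1) * #{u | j + 1 ≤ load rnd f q u} +
              T ^ j * (T * #{b | rnd b = q ∧ j ≤ load rnd f q (f b)}) := by ring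
        _ ≤ Fintype.card V * q.choose (j + 1) + Fintype.card V * q.choose j := by
            grw [mul_card_le_card_load_ge hcard hdisj hgreedy, ih, ih]
        _ = Fintype.card V * (q + 1).choose (j + 1) := by
            rw [Nat.choose_succ_succ', mul_add, add_comm]

theorem factorial_mul_pow_load_le {T : ℕ} (hcard : ∀ b, T ≤ #(cand b))
    (hdisj : ∀ b b', b ≠ b' → rnd b = rnd b' → Disjoint (cand b) (cand b'))
    (hmem : ∀ b, f b ∈ cand b)
    (hgreedy : ∀ b, ∀ v ∈ cand b, load rnd f (rnd b) (f b) ≤ load rnd f (rnd b) v) (q : ℕ)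
    (v : V) :
    (load rnd f q v) ! * T ^ load rnd f q v ≤ Fintype.card V * q ^ load rnd f q v := by
  set l := load rnd f q v
  have hv : 1 ≤ #{u | l ≤ load rnd f q u} := card_pos.2 ⟨v, by simp [l]⟩
  calc l ! * T ^ l ≤ l ! * (T ^ l * #{u | l ≤ load rnd f q u}) := by grw [← hv, mul_one]
    _ ≤ l ! * (Fintype.card V * q.choose l) := by
        grw [pow_mul_card_load_ge_le hcard hdisj hmem hgreedy]
    _ = Fintype.card V * q.descFactorial l := by
        rw [Nat.descFactorial_eq_factorial_mul_choose]; ring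
    _ ≤ Fintype.card V * q ^ l := by grw [Nat.descFactorial_le_pow]

end Loads

lemma log_le_half_self {z : ℝ} (hz : 0 ≤ z) : log z ≤ z / 2 := by
  rcases hz.eq_or_lt with rfl | hz
  · simp
  rw [log_le_iff_le_exp hz]
  nlinarith [quadratic_le_exp_of_nonneg (by positivity : 0 ≤ z / 2)]

lemma one_lt_log_three : 1 < log 3 := by
  rw [lt_log_iff_exp_lt (by norm_num)]
  linarith [exp_one_lt_d9]

lemma mul_log_le_three_mul {lam A m : ℝ} (hlam : 0 < lam) (hy : 1 < lam * A)
    (h : m * (log (lam * m) - 1) ≤ A) : m * log (lam * A) ≤ 3 * A := by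
  have hA : 0 < A := (pos_iff_pos_of_mul_pos (by linarith : 0 < lam * A)).1 hlam
  by_contra! hlt
  set y := lam * A
  have hlogy : 0 < log y := log_pos hy
  have hm : 3 * A / log y < m := (div_lt_iff₀ hlogy).2 (by linarith)
  have hlam_m : 3 * (y / log y) < lam * m := by
    calc 3 * (y / log y) = lam * (3 * A / log y) := by ring
      _ < lam * m := mul_lt_mul_of_pos_left hm hlam
  have hlog_lam_m : log 3 + (log y - log (log y)) < log (lam * m) := by
    rw [← log_div (by positivity) hlogy.ne', ← log_mul (by norm_num) (by positivity)]
    exact log_lt_log (by positivity) hlam_m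
  have hloglog : log (log y) ≤ log y / 2 := log_le_half_self hlogy.le
  have hm0 : 0 < m := (div_pos (by positivity) hlogy).trans hm
  -- `A ≥ m (log (λm) - 1) > m log y / 2 > 3A / 2`
  nlinarith [one_lt_log_three]

lemma mul_log_sub_one_le_log_of_factorial_mul_pow_le {lam x : ℝ} (hlam : 0 < lam) {l : ℕ}
    (h : l ! * lam ^ l ≤ x) : l * (log (lam * l) - 1) ≤ log x := by
  rcases Nat.eq_zero_or_pos l with rfl | hl
  · simpa using log_nonneg (by simpa using h)
  have hpow : (l : ℝ) ^ l ≤ exp l * l ! := by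
    have := pow_div_factorial_le_exp (l : ℝ) l.cast_nonneg l
    rwa [div_le_iff₀ (by positivity)] at this
  have hle : (lam * l) ^ l ≤ exp l * x := by
    calc (lam * l) ^ l = lam ^ l * l ^ l := mul_pow _ _ _
      _ ≤ lam ^ l * (exp l * l !) := by gcongr
      _ = exp l * (l ! * lam ^ l) := by ring
      _ ≤ exp l * x := by gcongr
  have hx : 0 < x := lt_of_lt_of_le (by positivity) h
  have := log_le_log (by positivity) hle
  rw [log_pow, log_mul (exp_pos _).ne' hx.ne', log_exp] at this
  linarith

end GreedyBalls

open GreedyBalls in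
/-- **Deterministic greedy balls-into-bins bound.** There is a universal constant
`K > 0` such that: for any finite set `V` of `n ≥ 3` bins, any real `λ ≥ 2`, any
integers `t ≥ 1` and `T ≥ 2tλ`, and any process over rounds `0, …, t−1` in which
each ball `b` (presented in round `rnd b`) comes with a candidate set `cand b ⊆ V`
of at least `T` bins, the candidate sets of distinct balls of the same round are
pairwise disjoint, and each ball is placed into a candidate bin `f b` whose load at
the start of its round is minimum among its candidate bins, every bin ends with
load at most `K · ln n / (ln λ + ln ln n)`. -/
theorem greedy_balls_into_bins :
    ∃ K : ℝ, 0 < K ∧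
      ∀ (V : Type) [Fintype V] [DecidableEq V],
        3 ≤ Fintype.card V →
        ∀ lam : ℝ, 2 ≤ lam →
        ∀ t T : ℕ, 1 ≤ t → 2 * (t : ℝ) * lam ≤ (T : ℝ) →
        ∀ (ι : Type) [Fintype ι] [DecidableEq ι],
        ∀ (rnd : ι → ℕ) (cand : ι → Finset V) (f : ι → V),
          (∀ b : ι, rnd b < t) →
          (∀ b : ι, T ≤ (cand b).card) →
          (∀ b b' : ι, b ≠ b' → rnd b = rnd b' → Disjoint (cand b) (cand b')) →
          (∀ b : ι, f b ∈ cand b) →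
          (∀ b : ι, ∀ v ∈ cand b,
            (Finset.univ.filter fun b' : ι => rnd b' < rnd b ∧ f b' = f b).card ≤
              (Finset.univ.filter fun b' : ι => rnd b' < rnd b ∧ f b' = v).card) →
          ∀ v : V,
            ((Finset.univ.filter fun b' : ι => f b' = v).card : ℝ) ≤
              K * Real.log (Fintype.card V) /
                (Real.log lam + Real.log (Real.log (Fintype.card V))) := by
  refine ⟨3, by norm_num, ?_⟩
  intro V _ _ hV lam hlam t T ht hT ι _ _ rnd cand f hrnd hcard hdisj hmem hgreedy v
  have hload : #{b | f b = v} = load rnd f t v := by simp [load, hrnd]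
  set l := load rnd f t v
  have hcount : (l ! : ℝ) * lam ^ l ≤ Fintype.card V := by
    have hT' : lam * t ≤ T := by nlinarith
    refine le_of_mul_le_mul_right ?_ (by positivity : (0 : ℝ) < (t : ℝ) ^ l)
    calc (l ! : ℝ) * lam ^ l * t ^ l = l ! * (lam * t) ^ l := by ring
      _ ≤ l ! * T ^ l := by gcongr
      _ ≤ Fintype.card V * t ^ l := by
          exact_mod_cast factorial_mul_pow_load_le hcard hdisj hmem hgreedy t v
  have hlog_card : 1 < log (Fintype.card V) := by
    have h3 : (3 : ℝ) ≤ Fintype.card V := by exact_mod_cast hV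
    rw [lt_log_iff_exp_lt (by positivity)]
    linarith [exp_one_lt_d9]
  have hbound := mul_log_le_three_mul (by positivity) (by nlinarith)
    (mul_log_sub_one_le_log_of_factorial_mul_pow_le (by positivity) hcount)
  rw [hload, le_div_iff₀ (by linarith [log_pos (by linarith : (1 : ℝ) < lam), log_pos hlog_card]),
    ← log_mul (by positivity) (by positivity)]
  exact hbound
end
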